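/- arXiv:1312.0927 — 6 statements merged into one kernel-verified Lean document; each statement's English description precedes it below -/
import Mathlib

section
/- Let Γ be a finite ordered weighted tree with negative definite intersection matrix. Then there exists a real-valued map h on the vertices of Γ with h(v) < 0 for all v, such that: (1) if v is a minimal element, then h(v) = w(v); and (2) if v is not minimal and v_{i_1},...,v_{i_r} are its immediate predecessors, then h(v) = w(v) - Σ_{j=1}^{r} 1/h(v_{i_j}). -/
/-!
Build `h` by recursion from the leaves towards the root, and alongside it, for every vertex `v`,
a vector `x_v` supported on the subtree below `v` with `x_v v = 1` and `x_vᵀ A x_v = h v`: take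
`x_v = e_v - ∑ x_u / h u` over the predecessors `u` of `v`. Different branches below `v` are
disjoint and not adjacent, so the `x_u` are pairwise `A`-orthogonal, and each pairs with `e_v`
to `1`. Hence `x_vᵀ A x_v = w v - ∑ 1 / h u = h v`, and negative definiteness makes it negative,
which in turn keeps the divisions at the next vertex meaningful.
-/

open Matrix

/-- A real symmetric matrix is negative definite if the associated quadratic form
is negative on nonzero vectors. -/
def IsNegDef {m : ℕ} (A : Matrix (Fin m) (Fin m) ℝ) : Prop :=
  A.IsSymm ∧ ∀ x : Fin m → ℝ, x ≠ 0 → x ⬝ᵥ A.mulVec x < 0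

/-- The immediate predecessors of a vertex `v` of a tree ordered towards a fixed
root `r`: the neighbours of `v` lying farther from `r` than `v`. -/
noncomputable def Preds {m : ℕ} (G : SimpleGraph (Fin m)) [DecidableRel G.Adj] (r v : Fin m) :
    Finset (Fin m) :=
  Finset.univ.filter fun u => G.Adj u v ∧ G.dist r u = G.dist r v + 1

namespace SimpleGraph

variable {V : Type*} {G : SimpleGraph V}

theorem dist_lt_card [Fintype V] (u v : V) : G.dist u v < Fintype.card V := by
  by_cases h : G.Reachable u v
  · obtain ⟨p, hp, hl⟩ := h.exists_path_of_dist
    exact hl ▸ hp.length_lt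
  · rw [dist_eq_zero_of_not_reachable h]
    exact Fintype.card_pos_iff.mpr ⟨u⟩

theorem IsTree.eq_of_dist_eq_add_one (hG : G.IsTree) {v u u' t : V} (hu : G.Adj v u)
    (hu' : G.Adj v u') (ht : G.dist v t = G.dist u t + 1) (ht' : G.dist v t = G.dist u' t + 1) :
    u = u' := by
  obtain ⟨p, hp⟩ := hG.connected.exists_walk_length_eq_dist u t
  obtain ⟨p', hp'⟩ := hG.connected.exists_walk_length_eq_dist u' t
  have hq : (Walk.cons hu p).IsPath := Walk.isPath_of_length_eq_dist _ (by simp [hp, ht])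
  have hq' : (Walk.cons hu' p').IsPath := Walk.isPath_of_length_eq_dist _ (by simp [hp', ht'])
  have heq := (hG.isAcyclic.subsingleton_path v t).elim ⟨_, hq⟩ ⟨_, hq'⟩
  simpa using congrArg (fun q : G.Path v t => q.1.snd) heq

theorem IsTree.not_adj_of_dist_eq_add_one (hG : G.IsTree) {v u u' t t' : V} (hu : G.Adj v u)
    (hu' : G.Adj v u') (hne : u ≠ u') (ht : G.dist v t = G.dist u t + 1)
    (ht' : G.dist v t' = G.dist u' t' + 1) : ¬G.Adj t t' := by
  intro hadj
  have hvu : G.dist v u = 1 := dist_eq_one_iff_adj.mpr hu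
  have hvu' : G.dist v u' = 1 := dist_eq_one_iff_adj.mpr hu'
  have htt' : G.dist t t' = 1 := dist_eq_one_iff_adj.mpr hadj
  have htt'' : G.dist t' t = 1 := dist_eq_one_iff_adj.mpr hadj.symm
  -- adjacent vertices of a tree are at distances from `v` differing by exactly one, so the
  -- farther of `t`, `t'` also lies in the branch of the nearer one
  rcases hG.dist_eq_dist_add_one_of_adj v hadj with h | h
  · have h1 := hG.connected.dist_triangle (u := u') (v := t') (w := t)
    have h2 := hG.connected.dist_triangle (u := v) (v := u') (w := t)
    exact hne (hG.eq_of_dist_eq_add_one hu hu' ht (by omega))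
  · have h1 := hG.connected.dist_triangle (u := u) (v := t) (w := t')
    have h2 := hG.connected.dist_triangle (u := v) (v := u) (w := t')
    exact hne (hG.eq_of_dist_eq_add_one hu hu' (by omega) ht')

def IsDescendant (G : SimpleGraph V) (r u t : V) : Prop :=
  G.dist r t = G.dist r u + G.dist u t

namespace IsDescendant

variable {r u v t : V}

theorem refl : G.IsDescendant r u u := by simp [IsDescendant]

theorem dist_eq_add_one (hG : G.Connected) (ht : G.IsDescendant r u t) (hu : G.Adj v u)
    (hd : G.dist r u = G.dist r v + 1) : G.dist v t = G.dist u t + 1 := by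
  have h1 := hG.dist_triangle (u := v) (v := u) (w := t)
  have h2 := hG.dist_triangle (u := r) (v := v) (w := t)
  rw [dist_eq_one_iff_adj.mpr hu] at h1
  unfold IsDescendant at ht
  omega

theorem of_child (hG : G.Connected) (ht : G.IsDescendant r u t) (hu : G.Adj v u)
    (hd : G.dist r u = G.dist r v + 1) : G.IsDescendant r v t := by
  have := ht.dist_eq_add_one hG hu hd
  unfold IsDescendant at ht ⊢
  omega

theorem ne_of_child (hG : G.Connected) (ht : G.IsDescendant r u t) (hu : G.Adj v u)
    (hd : G.dist r u = G.dist r v + 1) : t ≠ v := by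
  rintro rfl
  have := ht.dist_eq_add_one hG hu hd
  simp at this

theorem eq_of_adj_of_child (hG : G.Connected) (ht : G.IsDescendant r u t) (hu : G.Adj v u)
    (hd : G.dist r u = G.dist r v + 1) (hvt : G.Adj v t) : t = u := by
  have := ht.dist_eq_add_one hG hu hd
  rw [dist_eq_one_iff_adj.mpr hvt, right_eq_add, hG.dist_eq_zero_iff] at this
  exact this.symm

end IsDescendant

theorem IsTree.ne_and_not_adj_of_isDescendant_siblings (hG : G.IsTree) {r v u u' t t' : V}
    (hu : G.Adj v u) (hd : G.dist r u = G.dist r v + 1) (hu' : G.Adj v u')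
    (hd' : G.dist r u' = G.dist r v + 1) (hne : u ≠ u') (ht : G.IsDescendant r u t)
    (ht' : G.IsDescendant r u' t') : t ≠ t' ∧ ¬G.Adj t t' := by
  have h := ht.dist_eq_add_one hG.connected hu hd
  have h' := ht'.dist_eq_add_one hG.connected hu' hd'
  refine ⟨?_, hG.not_adj_of_dist_eq_add_one hu hu' hne h h'⟩
  rintro rfl
  exact hne (hG.eq_of_dist_eq_add_one hu hu' h h')

end SimpleGraph

theorem single_sub_sum_smul_apply_self {V ι : Type*} [DecidableEq V] {P : Finset ι}
    {y : ι → V → ℝ} (c : ι → ℝ) {v : V} (hy : ∀ u ∈ P, y u v = 0) :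
    (Pi.single v 1 - ∑ u ∈ P, c u • y u : V → ℝ) v = 1 := by
  rw [Pi.sub_apply, Pi.single_eq_same, Finset.sum_apply,
    Finset.sum_eq_zero fun u hu => by rw [Pi.smul_apply, hy u hu, smul_zero], sub_zero]

theorem exists_ne_zero_of_single_sub_sum_smul_apply_ne_zero {V ι : Type*} [DecidableEq V]
    {P : Finset ι} {y : ι → V → ℝ} {c : ι → ℝ} {v t : V}
    (ht : (Pi.single v 1 - ∑ u ∈ P, c u • y u : V → ℝ) t ≠ 0) (htv : t ≠ v) :
    ∃ u ∈ P, y u t ≠ 0 := by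
  rw [Pi.sub_apply, Pi.single_eq_of_ne htv, zero_sub, neg_ne_zero, Finset.sum_apply] at ht
  obtain ⟨u, hu, hut⟩ := Finset.exists_ne_zero_of_sum_ne_zero ht
  rw [Pi.smul_apply] at hut
  exact ⟨u, hu, right_ne_zero_of_smul hut⟩

section QuadraticForm

variable {V : Type*} [Fintype V] {A : Matrix V V ℝ}

theorem Matrix.IsSymm.dotProduct_mulVec_comm (hA : A.IsSymm) (x y : V → ℝ) :
    x ⬝ᵥ A *ᵥ y = y ⬝ᵥ A *ᵥ x := by
  rw [dotProduct_mulVec, ← mulVec_transpose, hA.eq, dotProduct_comm]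

theorem Matrix.dotProduct_mulVec_eq_zero_of_forall {x y : V → ℝ}
    (h : ∀ t s, x t ≠ 0 → y s ≠ 0 → A t s = 0) : x ⬝ᵥ A *ᵥ y = 0 := by
  refine Finset.sum_eq_zero fun t _ => ?_
  by_cases hxt : x t = 0
  · simp [hxt]
  refine mul_eq_zero_of_right _ (Finset.sum_eq_zero fun s _ => ?_)
  by_cases hys : y s = 0
  · simp [hys]
  · simp [h t s hxt hys]

/-- `e_v - ∑ y u / h u` is `e_v` made `A`-orthogonal to every `y u`, so its square equals its
pairing with `e_v`. -/
theorem Matrix.IsSymm.dotProduct_mulVec_single_sub_sum [DecidableEq V] {ι : Type*}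
    (hA : A.IsSymm) (v : V) (P : Finset ι) (y : ι → V → ℝ) (h : ι → ℝ) (h0 : ∀ u ∈ P, h u ≠ 0)
    (hv : ∀ u ∈ P, Pi.single v 1 ⬝ᵥ A *ᵥ y u = 1)
    (hyy : ∀ u ∈ P, ∀ u' ∈ P, u ≠ u' → y u ⬝ᵥ A *ᵥ y u' = 0)
    (hh : ∀ u ∈ P, y u ⬝ᵥ A *ᵥ y u = h u) :
    (Pi.single v 1 - ∑ u ∈ P, (1 / h u) • y u) ⬝ᵥ A *ᵥ
      (Pi.single v 1 - ∑ u ∈ P, (1 / h u) • y u) = A v v - ∑ u ∈ P, 1 / h u := by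
  generalize hx : Pi.single v 1 - ∑ u ∈ P, (1 / h u) • y u = x
  have horth : ∀ u ∈ P, x ⬝ᵥ A *ᵥ y u = 0 := by
    intro u hu
    rw [← hx, sub_dotProduct, sum_dotProduct,
      Finset.sum_eq_single_of_mem u hu fun u' hu' hne => by
        rw [smul_dotProduct, hyy u' hu' u hu hne, smul_zero],
      smul_dotProduct, hh u hu, hv u hu, smul_eq_mul, one_div_mul_cancel (h0 u hu), sub_self]
  have hsum : x ⬝ᵥ A *ᵥ ∑ u ∈ P, (1 / h u) • y u = 0 := by
    rw [mulVec_sum, dotProduct_sum]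
    exact Finset.sum_eq_zero fun u hu => by rw [mulVec_smul, dotProduct_smul, horth u hu, smul_zero]
  calc x ⬝ᵥ A *ᵥ x = x ⬝ᵥ A *ᵥ (Pi.single v 1 - ∑ u ∈ P, (1 / h u) • y u) := by rw [hx]
    _ = Pi.single v 1 ⬝ᵥ A *ᵥ x := by
        rw [mulVec_sub, dotProduct_sub, hsum, sub_zero, hA.dotProduct_mulVec_comm]
    _ = A v v - ∑ u ∈ P, 1 / h u := by
        rw [← hx, mulVec_sub, dotProduct_sub, mulVec_sum, dotProduct_sum,
          Finset.sum_congr rfl fun u hu => by rw [mulVec_smul, dotProduct_smul, hv u hu,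
            smul_eq_mul, mul_one]]
        simp [single_dotProduct, mulVec_single]

variable {G : SimpleGraph V} {r u u' v : V}

theorem single_dotProduct_mulVec_eq_one_of_isDescendant [DecidableEq V] [DecidableRel G.Adj]
    (hG : G.Connected) (hoff : ∀ i j, i ≠ j → A i j = if G.Adj i j then 1 else 0)
    (hu : G.Adj v u) (hd : G.dist r u = G.dist r v + 1) {y : V → ℝ} (hyu : y u = 1)
    (hy : ∀ t, y t ≠ 0 → G.IsDescendant r u t) : Pi.single v 1 ⬝ᵥ A *ᵥ y = 1 := by
  rw [single_dotProduct, one_mul, mulVec, dotProduct, Finset.sum_eq_single u]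
  · rw [hyu, hoff v u hu.ne, if_pos hu, one_mul]
  · intro t _ htu
    by_cases hyt : y t = 0
    · rw [hyt, mul_zero]
    have ht := hy t hyt
    rw [hoff v t (ht.ne_of_child hG hu hd).symm,
      if_neg fun hvt => htu (ht.eq_of_adj_of_child hG hu hd hvt), zero_mul]
  · simp

theorem dotProduct_mulVec_eq_zero_of_isDescendant_siblings [DecidableRel G.Adj] (hG : G.IsTree)
    (hoff : ∀ i j, i ≠ j → A i j = if G.Adj i j then 1 else 0) (hu : G.Adj v u)
    (hd : G.dist r u = G.dist r v + 1) (hu' : G.Adj v u') (hd' : G.dist r u' = G.dist r v + 1)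
    (hne : u ≠ u') {y y' : V → ℝ} (hy : ∀ t, y t ≠ 0 → G.IsDescendant r u t)
    (hy' : ∀ t, y' t ≠ 0 → G.IsDescendant r u' t) : y ⬝ᵥ A *ᵥ y' = 0 :=
  dotProduct_mulVec_eq_zero_of_forall fun t s ht hs => by
    obtain ⟨hts, hadj⟩ :=
      hG.ne_and_not_adj_of_isDescendant_siblings hu hd hu' hd' hne (hy t ht) (hy' s hs)
    rw [hoff t s hts, if_neg hadj]

end QuadraticForm

section ContFracWeight

variable {m : ℕ} (G : SimpleGraph (Fin m)) [DecidableRel G.Adj] (r : Fin m) (w : Fin m → ℝ)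

theorem mem_preds {v u : Fin m} : u ∈ Preds G r v ↔ G.Adj v u ∧ G.dist r u = G.dist r v + 1 := by
  simp [Preds, G.adj_comm]

theorem sub_dist_lt_sub_dist_of_mem_preds {v u : Fin m} (hu : u ∈ Preds G r v) :
    m - G.dist r u < m - G.dist r v := by
  have hd := ((mem_preds G r).mp hu).2
  have := G.dist_lt_card r u
  rw [Fintype.card_fin] at this
  omega

noncomputable def contFracWeight (v : Fin m) : ℝ :=
  w v - ∑ u ∈ (Preds G r v).attach, 1 / contFracWeight u
termination_by m - G.dist r v
decreasing_by exact sub_dist_lt_sub_dist_of_mem_preds G r u.2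

theorem contFracWeight_eq (v : Fin m) :
    contFracWeight G r w v = w v - ∑ u ∈ Preds G r v, 1 / contFracWeight G r w u := by
  rw [contFracWeight, Finset.sum_attach (Preds G r v) fun u => 1 / contFracWeight G r w u]

variable {G r w} {A : Matrix (Fin m) (Fin m) ℝ}

theorem exists_vector_dotProduct_mulVec_eq_contFracWeight (hG : G.IsTree) (hA : IsNegDef A)
    (hdiag : ∀ v, A v v = w v) (hoff : ∀ i j, i ≠ j → A i j = if G.Adj i j then 1 else 0)
    (v : Fin m) :
    ∃ x : Fin m → ℝ, x v = 1 ∧ (∀ t, x t ≠ 0 → G.IsDescendant r v t) ∧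
      x ⬝ᵥ A *ᵥ x = contFracWeight G r w v := by
  have IH : ∀ u ∈ Preds G r v, ∃ y : Fin m → ℝ, y u = 1 ∧
      (∀ t, y t ≠ 0 → G.IsDescendant r u t) ∧ y ⬝ᵥ A *ᵥ y = contFracWeight G r w u :=
    fun u _ => exists_vector_dotProduct_mulVec_eq_contFracWeight hG hA hdiag hoff u
  choose! y hyu hy hyy using IH
  have hchild : ∀ u ∈ Preds G r v, G.Adj v u ∧ G.dist r u = G.dist r v + 1 :=
    fun u hu => (mem_preds G r).mp hu
  have hne : ∀ u ∈ Preds G r v, contFracWeight G r w u ≠ 0 := fun u hu => by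
    rw [← hyy u hu]
    exact (hA.2 (y u) fun h0 => by simpa [h0] using hyu u hu).ne
  have hyv : ∀ u ∈ Preds G r v, y u v = 0 := fun u hu => by
    by_contra h0
    exact (hy u hu v h0).ne_of_child hG.connected (hchild u hu).1 (hchild u hu).2 rfl
  refine ⟨Pi.single v 1 - ∑ u ∈ Preds G r v, (1 / contFracWeight G r w u) • y u, ?_, ?_, ?_⟩
  · exact single_sub_sum_smul_apply_self _ hyv
  · intro t ht
    by_cases htv : t = v
    · exact htv ▸ SimpleGraph.IsDescendant.refl
    obtain ⟨u, hu, hut⟩ := exists_ne_zero_of_single_sub_sum_smul_apply_ne_zero ht htv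
    exact (hy u hu t hut).of_child hG.connected (hchild u hu).1 (hchild u hu).2
  · rw [hA.1.dotProduct_mulVec_single_sub_sum v _ y _ hne, hdiag, ← contFracWeight_eq]
    · exact fun u hu => single_dotProduct_mulVec_eq_one_of_isDescendant hG.connected hoff
        (hchild u hu).1 (hchild u hu).2 (hyu u hu) (hy u hu)
    · exact fun u hu u' hu' huu' => dotProduct_mulVec_eq_zero_of_isDescendant_siblings hG hoff
        (hchild u hu).1 (hchild u hu).2 (hchild u' hu').1 (hchild u' hu').2 huu' (hy u hu)
        (hy u' hu')
    · exact hyy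
termination_by m - G.dist r v
decreasing_by exact sub_dist_lt_sub_dist_of_mem_preds G r ‹_›

theorem contFracWeight_neg (hG : G.IsTree) (hA : IsNegDef A) (hdiag : ∀ v, A v v = w v)
    (hoff : ∀ i j, i ≠ j → A i j = if G.Adj i j then 1 else 0) (v : Fin m) :
    contFracWeight G r w v < 0 := by
  obtain ⟨x, hxv, -, hx⟩ := exists_vector_dotProduct_mulVec_eq_contFracWeight hG hA hdiag hoff v
  exact hx ▸ hA.2 x fun h0 => by simp [h0] at hxv

end ContFracWeight

theorem stmt_0_general (m : ℕ) (G : SimpleGraph (Fin m)) [DecidableRel G.Adj]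
    (hG : G.IsTree) (r : Fin m)
    (w : Fin m → ℝ)
    (A : Matrix (Fin m) (Fin m) ℝ)
    (hdiag : ∀ v, A v v = w v)
    (hoff : ∀ i j, i ≠ j → A i j = if G.Adj i j then 1 else 0)
    (hneg : IsNegDef A) :
    ∃ h : Fin m → ℝ, (∀ v, h v < 0) ∧
      ∀ v, h v = w v - ∑ u ∈ Preds G r v, 1 / h u :=
  ⟨contFracWeight G r w, contFracWeight_neg hG hneg hdiag hoff, contFracWeight_eq G r w⟩

/-- Proposition 7 of the paper: on a finite ordered weighted tree (root `r`)
whose intersection matrix is negative definite, there is a negative real map `h`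
on the vertices with `h v = w v` for minimal `v` and
`h v = w v − Σ 1/h(u)` over the immediate predecessors `u` of `v` otherwise. -/
theorem stmt_0 (m : ℕ) (hm : 0 < m) (G : SimpleGraph (Fin m)) [DecidableRel G.Adj]
    (hG : G.IsTree) (r : Fin m)
    (w : Fin m → ℝ) (hw : ∀ v, w v ≠ 0)
    (A : Matrix (Fin m) (Fin m) ℝ)
    (hdiag : ∀ v, A v v = w v)
    (hoff : ∀ i j, i ≠ j → A i j = if G.Adj i j then 1 else 0)
    (hneg : IsNegDef A) :
    ∃ h : Fin m → ℝ, (∀ v, h v < 0) ∧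
      ∀ v, h v = w v - ∑ u ∈ Preds G r v, 1 / h u :=
  stmt_0_general m G hG r w A hdiag hoff hneg
end

section
/- Let Γ be a finite tree whose vertices v carry nonzero real weights w(v), with negative definite intersection matrix, and suppose each edge e incident to vertices u,v carries two real numbers I(u,e) and I(v,e) ('indices at the two ends of e') satisfying the reciprocity condition I(v,e) ≥ 1/I(u,e) whenever I(u,e) < 0, or I(v,e) ≥ 0. Suppose moreover that at each vertex v, the sum of I(v,e) over all edges e incident to v plus the sum of the indices of 'free points' at v is at most w(v). Then there exists a vertex v_0 and a free point q at v_0 with index of negative real part. -/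
open Matrix

namespace SepThmAux
open SimpleGraph

variable {V : Type*} {G : SimpleGraph V}

/-- Product of edge-ratios along a walk. -/
noncomputable def wt (ρ : V → V → ℝ) {r : V} : ∀ {u : V}, G.Walk u r → ℝ
  | _, SimpleGraph.Walk.nil => 1
  | _, SimpleGraph.Walk.cons (u := a) (v := b) _ p => ρ a b * wt ρ p

@[simp] lemma wt_nil (ρ : V → V → ℝ) {r : V} :
    wt ρ (SimpleGraph.Walk.nil : G.Walk r r) = 1 := by simp [wt]

@[simp] lemma wt_cons (ρ : V → V → ℝ) {u v r : V} (h : G.Adj u v) (p : G.Walk v r) :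
    wt ρ (SimpleGraph.Walk.cons h p) = ρ u v * wt ρ p := by simp [wt]

lemma wt_pos (ρ : V → V → ℝ) (hρ : ∀ u v, G.Adj u v → 0 < ρ u v) {r : V} :
    ∀ {u : V} (p : G.Walk u r), 0 < wt ρ p := by
  intro u p
  induction p with
  | nil => simp
  | cons h p ih => rw [wt_cons]; exact mul_pos (hρ _ _ h) ih

/-- The vertex function built from edge-ratios: value at `v` is the product of ratios
along the unique path from `v` to the root `r`. -/
noncomputable def xfun (hG : G.IsTree) (r : V) (ρ : V → V → ℝ) (v : V) : ℝ :=
  wt ρ (hG.existsUnique_path v r).choose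

lemma xfun_pos (hG : G.IsTree) (r : V) (ρ : V → V → ℝ)
    (hρ : ∀ u v, G.Adj u v → 0 < ρ u v) (v : V) : 0 < xfun hG r ρ v :=
  wt_pos ρ hρ _

lemma xfun_ratio (hG : G.IsTree) (r : V) (ρ : V → V → ℝ) {u v : V} (h : G.Adj u v)
    (hinv : ρ u v * ρ v u = 1) :
    xfun hG r ρ u = ρ u v * xfun hG r ρ v := by
  classical
  have hP : (hG.existsUnique_path v r).choose.IsPath := (hG.existsUnique_path v r).choose_spec.1
  set P := (hG.existsUnique_path v r).choose with hPdef
  by_cases hu : u ∈ P.support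
  · have hT : (P.takeUntil u hu).IsPath := hP.takeUntil hu
    have hsingle : (SimpleGraph.Walk.cons h.symm SimpleGraph.Walk.nil : G.Walk v u).IsPath := by
      simp [SimpleGraph.Walk.cons_isPath_iff, SimpleGraph.Walk.IsPath.nil, h.ne']
    have hTeq : P.takeUntil u hu = SimpleGraph.Walk.cons h.symm SimpleGraph.Walk.nil :=
      (hG.existsUnique_path v u).unique hT hsingle
    have hD : (P.dropUntil u hu).IsPath := hP.dropUntil hu
    have hDeq : (hG.existsUnique_path u r).choose = P.dropUntil u hu :=
      ((hG.existsUnique_path u r).unique (hG.existsUnique_path u r).choose_spec.1 hD)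
    have hPeq : P = SimpleGraph.Walk.cons h.symm (P.dropUntil u hu) := by
      conv_lhs => rw [← P.take_spec hu]
      rw [hTeq, SimpleGraph.Walk.cons_append, SimpleGraph.Walk.nil_append]
    have hkey : xfun hG r ρ v = ρ v u * xfun hG r ρ u := by
      rw [xfun, ← hPdef, hPeq, wt_cons, xfun, hDeq]
    rw [hkey, ← mul_assoc, hinv, one_mul]
  · have hcons : (SimpleGraph.Walk.cons h P).IsPath := hP.cons hu
    have heq : (hG.existsUnique_path u r).choose = SimpleGraph.Walk.cons h P :=
      (hG.existsUnique_path u r).unique (hG.existsUnique_path u r).choose_spec.1 hcons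
    rw [xfun, heq, wt_cons, xfun, ← hPdef]

end SepThmAux

/-- Abstract combinatorial form of the separatrix theorem.  `Γ` is a finite tree
with nonzero weights `w` and negative definite intersection matrix.  Each edge
`{u,v}` carries indices `I u v` (at the end `u`) and `I v u` (at the end `v`)
satisfying the reciprocity condition: whenever `I u v < 0`, either
`I v u ≥ 1 / I u v` or `I v u ≥ 0`.  Each vertex `v` carries a finite set
`F v` of "free points" with indices `f v ·`, and the sum of all edge indices at
`v` plus the sum of the free-point indices at `v` is at most `w v`.  Then some
vertex carries a free point with negative index. -/
theorem stmt_6 (m : ℕ) (hm : 0 < m) (G : SimpleGraph (Fin m)) [DecidableRel G.Adj]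
    (hG : G.IsTree)
    (w : Fin m → ℝ) (hw : ∀ v, w v ≠ 0)
    (A : Matrix (Fin m) (Fin m) ℝ)
    (hdiag : ∀ v, A v v = w v)
    (hoff : ∀ i j, i ≠ j → A i j = if G.Adj i j then 1 else 0)
    (hneg : IsNegDef A)
    (I : Fin m → Fin m → ℝ)
    (hrec : ∀ u v, G.Adj u v → I u v < 0 → I v u ≥ 1 / I u v ∨ 0 ≤ I v u)
    (F : Fin m → Finset ℕ) (f : Fin m → ℕ → ℝ)
    (hsum : ∀ v, (∑ u ∈ G.neighborFinset v, I v u) + ∑ q ∈ F v, f v q ≤ w v) :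
    ∃ v, ∃ q ∈ F v, f v q < 0 := by
  classical
  by_contra hcon
  push_neg at hcon
  -- all free-point indices are nonnegative; derive the per-vertex edge inequality
  have hS : ∀ v, (∑ u ∈ G.neighborFinset v, I v u) ≤ w v := by
    intro v
    have h1 : 0 ≤ ∑ q ∈ F v, f v q := Finset.sum_nonneg fun q hq => hcon v q hq
    linarith [hsum v]
  -- for every (ordered) adjacent pair there is a good ratio
  have ht : ∀ u v : Fin m, ∃ t : ℝ, 0 < t ∧
      (G.Adj u v → 0 ≤ I u v * t ^ 2 + 2 * t + I v u) := by
    intro u v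
    by_cases ha : G.Adj u v
    · rcases lt_or_ge (I u v) 0 with h0 | h0
      · have h1a : 1 / I u v < 0 := one_div_neg.mpr h0
        have hane : I u v ≠ 0 := ne_of_lt h0
        have key : I u v * (-(1 / I u v)) ^ 2 + 2 * (-(1 / I u v)) + I v u
            = I v u - 1 / I u v := by
          field_simp
          ring
        refine ⟨-(1 / I u v), by linarith, fun _ => ?_⟩
        rw [key]
        rcases hrec u v ha h0 with hb | hb <;> linarith
      · refine ⟨max 1 (-I v u), lt_of_lt_of_le one_pos (le_max_left _ _), fun _ => ?_⟩
        have h1 : (1:ℝ) ≤ max 1 (-I v u) := le_max_left _ _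
        have h2 : -I v u ≤ max 1 (-I v u) := le_max_right _ _
        nlinarith [mul_nonneg h0 (sq_nonneg (max 1 (-I v u)))]
    · exact ⟨1, one_pos, fun h => absurd h ha⟩
  choose t0 ht0pos ht0 using ht
  set ρ : Fin m → Fin m → ℝ := fun u v => if u < v then t0 u v else 1 / t0 v u with hρdef
  have hρpos : ∀ u v, 0 < ρ u v := by
    intro u v
    rw [hρdef]
    dsimp only
    split
    · exact ht0pos u v
    · exact one_div_pos.mpr (ht0pos v u)
  have hρinv : ∀ u v : Fin m, u ≠ v → ρ u v * ρ v u = 1 := by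
    intro u v hne
    rcases lt_or_gt_of_ne hne with hlt | hlt
    · rw [hρdef]
      dsimp only
      rw [if_pos hlt, if_neg (asymm hlt)]
      exact mul_one_div_cancel (ne_of_gt (ht0pos u v))
    · rw [hρdef]
      dsimp only
      rw [if_neg (asymm hlt), if_pos hlt]
      exact one_div_mul_cancel (ne_of_gt (ht0pos v u))
  set r : Fin m := ⟨0, hm⟩ with hrdef
  set x : Fin m → ℝ := SepThmAux.xfun hG r ρ with hxdef
  have hxpos : ∀ v, 0 < x v := SepThmAux.xfun_pos hG r ρ (fun u v _ => hρpos u v)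
  have hxratio : ∀ u v, G.Adj u v → x u = ρ u v * x v := fun u v h =>
    SepThmAux.xfun_ratio hG r ρ h (hρinv u v h.ne)
  -- per-edge quadratic inequality
  have hedge' : ∀ u v, u < v → G.Adj u v →
      0 ≤ I u v * x u ^ 2 + 2 * (x u * x v) + I v u * x v ^ 2 := by
    intro u v hlt hadj
    have hx : x u = t0 u v * x v := by
      rw [hxratio u v hadj, hρdef]
      dsimp only
      rw [if_pos hlt]
    have hq := ht0 u v hadj
    have hsq : (0:ℝ) ≤ x v ^ 2 := sq_nonneg _
    calc (0:ℝ) ≤ x v ^ 2 * (I u v * t0 u v ^ 2 + 2 * t0 u v + I v u) := mul_nonneg hsq hq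
      _ = I u v * (t0 u v * x v) ^ 2 + 2 * (t0 u v * x v * x v) + I v u * x v ^ 2 := by ring
      _ = I u v * x u ^ 2 + 2 * (x u * x v) + I v u * x v ^ 2 := by rw [← hx]
  have hedge : ∀ u v, G.Adj u v →
      0 ≤ I u v * x u ^ 2 + 2 * (x u * x v) + I v u * x v ^ 2 := by
    intro u v hadj
    rcases lt_trichotomy u v with hlt | heq | hlt
    · exact hedge' u v hlt hadj
    · exact absurd heq hadj.ne
    · have h := hedge' v u hlt hadj.symm
      nlinarith [h]
  -- the vector x is nonzero
  have hxne : x ≠ 0 := by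
    intro h0
    have h1 := hxpos r
    rw [h0] at h1
    exact lt_irrefl 0 h1
  have hQ := hneg.2 x hxne
  -- row sums of A against x
  have hrow : ∀ v, (∑ u, A v u * x u) = w v * x v + ∑ u ∈ G.neighborFinset v, x u := by
    intro v
    have hsub : G.neighborFinset v ⊆ Finset.univ.erase v := by
      intro u hu
      rw [SimpleGraph.mem_neighborFinset] at hu
      exact Finset.mem_erase.mpr ⟨hu.ne', Finset.mem_univ u⟩
    have hzero : ∀ u ∈ Finset.univ.erase v, u ∉ G.neighborFinset v → A v u * x u = 0 := by
      intro u hu hnu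
      rw [SimpleGraph.mem_neighborFinset] at hnu
      have hne : u ≠ v := (Finset.mem_erase.mp hu).1
      rw [hoff v u (Ne.symm hne), if_neg hnu, zero_mul]
    have h1 : ∑ u ∈ Finset.univ.erase v, A v u * x u = ∑ u ∈ G.neighborFinset v, x u := by
      calc ∑ u ∈ Finset.univ.erase v, A v u * x u
          = ∑ u ∈ G.neighborFinset v, A v u * x u := (Finset.sum_subset hsub hzero).symm
        _ = ∑ u ∈ G.neighborFinset v, x u := Finset.sum_congr rfl (fun u hu => by
              rw [SimpleGraph.mem_neighborFinset] at hu
              rw [hoff v u hu.ne, if_pos hu, one_mul])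
    rw [← Finset.add_sum_erase _ _ (Finset.mem_univ v), h1, hdiag]
  -- express the quadratic form
  have hform : x ⬝ᵥ A.mulVec x
      = ∑ v, (w v * x v ^ 2 + ∑ u ∈ G.neighborFinset v, x v * x u) := by
    have hmv : ∀ v, A.mulVec x v = ∑ u, A v u * x u := by
      intro v
      rfl
    rw [dotProduct]
    refine Finset.sum_congr rfl (fun v _ => ?_)
    rw [hmv v, hrow v, mul_add, Finset.mul_sum]
    ring_nf
  -- symmetrized edge sums
  have hfilter : ∀ (g : Fin m → Fin m → ℝ) (v : Fin m),
      ∑ u ∈ G.neighborFinset v, g v u = ∑ u, if G.Adj v u then g v u else 0 := by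
    intro g v
    rw [← Finset.sum_filter]
    refine Finset.sum_congr ?_ (fun _ _ => rfl)
    ext u
    simp [SimpleGraph.mem_neighborFinset]
  have hswap : ∀ (g : Fin m → Fin m → ℝ),
      ∑ v, ∑ u ∈ G.neighborFinset v, g v u = ∑ v, ∑ u ∈ G.neighborFinset v, g u v := by
    intro g
    calc ∑ v, ∑ u ∈ G.neighborFinset v, g v u
        = ∑ v, ∑ u, if G.Adj v u then g v u else 0 :=
          Finset.sum_congr rfl (fun v _ => hfilter g v)
      _ = ∑ u, ∑ v, if G.Adj v u then g v u else 0 := Finset.sum_comm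
      _ = ∑ v, ∑ u, if G.Adj v u then g u v else 0 := by
          refine Finset.sum_congr rfl (fun a _ => Finset.sum_congr rfl (fun b _ => ?_))
          by_cases hab : G.Adj a b
          · rw [if_pos hab, if_pos (hab.symm)]
          · rw [if_neg hab, if_neg (fun h => hab h.symm)]
      _ = ∑ v, ∑ u ∈ G.neighborFinset v, g u v :=
          (Finset.sum_congr rfl (fun v _ => (hfilter (fun a b => g b a) v).symm))
  -- the main lower bound
  set T : ℝ := ∑ v, ∑ u ∈ G.neighborFinset v, (I v u * x v ^ 2 + x v * x u) with hTdef
  have hT2 : 0 ≤ T + T := by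
    have hTT : T + T = ∑ v, ∑ u ∈ G.neighborFinset v,
        ((I v u * x v ^ 2 + x v * x u) + (I u v * x u ^ 2 + x u * x v)) := by
      rw [hTdef]
      nth_rewrite 2 [hswap (fun v u => I v u * x v ^ 2 + x v * x u)]
      rw [← Finset.sum_add_distrib]
      refine Finset.sum_congr rfl (fun v _ => ?_)
      rw [← Finset.sum_add_distrib]
    rw [hTT]
    refine Finset.sum_nonneg (fun v _ => Finset.sum_nonneg (fun u hu => ?_))
    rw [SimpleGraph.mem_neighborFinset] at hu
    have h := hedge v u hu
    nlinarith [h]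
  have hT0 : 0 ≤ T := by linarith
  have hTle : T ≤ x ⬝ᵥ A.mulVec x := by
    rw [hform, hTdef]
    refine Finset.sum_le_sum (fun v _ => ?_)
    rw [Finset.sum_add_distrib]
    have h1 : ∑ u ∈ G.neighborFinset v, I v u * x v ^ 2
        = (∑ u ∈ G.neighborFinset v, I v u) * x v ^ 2 := (Finset.sum_mul _ _ _).symm
    have h2 := mul_le_mul_of_nonneg_right (hS v) (sq_nonneg (x v))
    rw [h1]
    linarith
  linarith
end

section
/- Let Z = xA ∂/∂x + yB ∂/∂y be a holomorphic vector field on an open set U ⊇ {|x| ≤ a, |y| ≤ b} in ℂ², with Re(A) > 0 > Re(B) on U. Then for any initial point p = (x₀, y₀) with 0 < |x₀| ≤ a and |y₀| ≤ b, the forward trajectory of the real flow of Z through p meets the set {|x| = a, |y| ≤ b} at exactly one point. -/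
/-!
Write `F = diagField A B` for the field `(x A, y B)`. Along a trajectory,
`d/dt ‖x‖² = 2 ‖x‖² Re A` and `d/dt ‖y‖² = 2 ‖y‖² Re B`, so `‖x‖` increases and `‖y‖` decreases
while the trajectory stays in `U`. Hence a trajectory that ends on `‖x‖ = a` has stayed in the
polydisc `‖x‖ ≤ a, ‖y‖ ≤ b`. There `F` is Lipschitz (Cauchy estimates), so two such trajectories
agree, and since `‖x‖` is strictly increasing they end at the same time.

For existence, compose `F` with a Lipschitz retraction of `ℂ²` onto the polydisc. The result is
bounded and globally Lipschitz, so Picard–Lindelöf gives a solution on any time interval, and it is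
again of the form `(x A', y B')` with `Re A' ≥ 0 ≥ Re B'`. Inside the polydisc `Re A ≥ ε > 0`, so
`‖x‖²` grows at a definite rate and reaches `a²`; up to that time the solution is a trajectory
of `F`.
-/

open Set Metric
open scoped NNReal

section ScalarLinearODE

variable {x c : ℝ → ℂ} {a b : ℝ}

theorem HasDerivWithinAt.norm_sq_of_mul {x : ℝ → ℂ} {c : ℂ} {s : Set ℝ} {t : ℝ}
    (hx : HasDerivWithinAt x (x t * c) s t) :
    HasDerivWithinAt (‖x ·‖ ^ 2) (2 * ‖x t‖ ^ 2 * c.re) s t := by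
  convert hx.norm_sq using 1
  rw [Complex.inner, mul_right_comm (x t) c, Complex.mul_conj', ← Complex.ofReal_pow,
    Complex.re_ofReal_mul, mul_assoc]

theorem continuousOn_norm_sq_of_hasDerivWithinAt_mul
    (hx : ∀ t ∈ Icc a b, HasDerivWithinAt x (x t * c t) (Icc a b) t) :
    ContinuousOn (‖x ·‖ ^ 2) (Icc a b) :=
  fun t ht ↦ (hx t ht).norm_sq_of_mul.continuousWithinAt

theorem hasDerivWithinAt_interior_norm_sq_of_mul
    (hx : ∀ t ∈ Icc a b, HasDerivWithinAt x (x t * c t) (Icc a b) t) :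
    ∀ t ∈ interior (Icc a b),
      HasDerivWithinAt (‖x ·‖ ^ 2) (2 * ‖x t‖ ^ 2 * (c t).re) (interior (Icc a b)) t :=
  fun t ht ↦ (hx t (interior_subset ht)).norm_sq_of_mul.mono interior_subset

theorem monotoneOn_norm_of_hasDerivWithinAt_mul
    (hx : ∀ t ∈ Icc a b, HasDerivWithinAt x (x t * c t) (Icc a b) t)
    (hc : ∀ t ∈ Icc a b, 0 ≤ (c t).re) : MonotoneOn (‖x ·‖) (Icc a b) := by
  have hsq := monotoneOn_of_hasDerivWithinAt_nonneg (convex_Icc a b)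
    (continuousOn_norm_sq_of_hasDerivWithinAt_mul hx)
    (hasDerivWithinAt_interior_norm_sq_of_mul hx)
    fun t ht ↦ by have := hc t (interior_subset ht); positivity
  exact fun s hs t ht hst ↦ (pow_le_pow_iff_left₀ (norm_nonneg _) (norm_nonneg _)
    two_ne_zero).1 (hsq hs ht hst)

theorem antitoneOn_norm_of_hasDerivWithinAt_mul
    (hx : ∀ t ∈ Icc a b, HasDerivWithinAt x (x t * c t) (Icc a b) t)
    (hc : ∀ t ∈ Icc a b, (c t).re ≤ 0) : AntitoneOn (‖x ·‖) (Icc a b) := by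
  have hsq := antitoneOn_of_hasDerivWithinAt_nonpos (convex_Icc a b)
    (continuousOn_norm_sq_of_hasDerivWithinAt_mul hx)
    (hasDerivWithinAt_interior_norm_sq_of_mul hx)
    fun t ht ↦ mul_nonpos_of_nonneg_of_nonpos (by positivity) (hc t (interior_subset ht))
  exact fun s hs t ht hst ↦ (pow_le_pow_iff_left₀ (norm_nonneg _) (norm_nonneg _)
    two_ne_zero).1 (hsq hs ht hst)

theorem strictMonoOn_norm_of_hasDerivWithinAt_mul
    (hx : ∀ t ∈ Icc a b, HasDerivWithinAt x (x t * c t) (Icc a b) t)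
    (hc : ∀ t ∈ Icc a b, 0 < (c t).re) (hxa : x a ≠ 0) : StrictMonoOn (‖x ·‖) (Icc a b) := by
  have hmono := monotoneOn_norm_of_hasDerivWithinAt_mul hx fun t ht ↦ (hc t ht).le
  have hsq := strictMonoOn_of_hasDerivWithinAt_pos (convex_Icc a b)
    (continuousOn_norm_sq_of_hasDerivWithinAt_mul hx)
    (hasDerivWithinAt_interior_norm_sq_of_mul hx) fun t ht ↦ by
      have ht' := interior_subset ht
      have : 0 < ‖x t‖ :=
        (norm_pos_iff.2 hxa).trans_le (hmono (left_mem_Icc.2 (ht'.1.trans ht'.2)) ht' ht'.1)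
      have := hc t ht'
      positivity
  exact fun s hs t ht hst ↦ (pow_lt_pow_iff_left₀ (norm_nonneg _) (norm_nonneg _)
    two_ne_zero).1 (hsq hs ht hst)

theorem norm_sq_mul_le_norm_sq_of_hasDerivWithinAt_mul {ε : ℝ} (hab : a ≤ b)
    (hx : ∀ t ∈ Icc a b, HasDerivWithinAt x (x t * c t) (Icc a b) t)
    (hε : 0 ≤ ε) (hc : ∀ t ∈ Icc a b, ε ≤ (c t).re) :
    ‖x a‖ ^ 2 * (1 + 2 * ε * (b - a)) ≤ ‖x b‖ ^ 2 := by
  have hmono := monotoneOn_norm_of_hasDerivWithinAt_mul hx fun t ht ↦ hε.trans (hc t ht)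
  set C := 2 * ε * ‖x a‖ ^ 2
  have hg := monotoneOn_of_hasDerivWithinAt_nonneg (f := fun t ↦ ‖x t‖ ^ 2 - C * t)
    (convex_Icc a b)
    ((continuousOn_norm_sq_of_hasDerivWithinAt_mul hx).sub (continuousOn_const.mul continuousOn_id))
    (fun t ht ↦ (hasDerivWithinAt_interior_norm_sq_of_mul hx t ht).sub
      ((hasDerivWithinAt_id t _).const_mul C |>.congr_deriv (mul_one C)))
    fun t ht ↦ by
      have ht' := interior_subset ht
      have h1 : ‖x a‖ ≤ ‖x t‖ := hmono (left_mem_Icc.2 hab) ht' ht'.1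
      have h2 : ‖x a‖ ^ 2 ≤ ‖x t‖ ^ 2 := by gcongr
      have h3 := hc t ht'
      simp only [C, sub_nonneg]
      calc 2 * ε * ‖x a‖ ^ 2 ≤ 2 * (c t).re * ‖x t‖ ^ 2 := by gcongr; linarith
        _ = 2 * ‖x t‖ ^ 2 * (c t).re := by ring
  have := hg (left_mem_Icc.2 hab) (right_mem_Icc.2 hab) hab
  simp only [C] at this
  linarith

end ScalarLinearODE

theorem DifferentiableOn.exists_lipschitzOnWith_of_isCompact {E F : Type*}
    [NormedAddCommGroup E] [NormedSpace ℂ E] [ProperSpace E]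
    [NormedAddCommGroup F] [NormedSpace ℂ F] {f : E → F} {U K : Set E}
    (hf : DifferentiableOn ℂ f U) (hU : IsOpen U) (hKU : K ⊆ U) (hK : IsCompact K)
    (hKc : Convex ℝ K) : ∃ C, LipschitzOnWith C f K := by
  obtain ⟨δ, hδ, hδU⟩ := hK.exists_cthickening_subset_open hU hKU
  obtain ⟨M, hM⟩ := hK.cthickening.exists_bound_of_continuousOn (hf.continuousOn.mono hδU)
  refine ⟨(2 * M / δ).toNNReal, hKc.lipschitzOnWith_of_nnnorm_fderiv_le
    (fun p hp ↦ hf.differentiableAt (hU.mem_nhds (hKU hp))) fun p hp ↦ ?_⟩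
  have hball : ball p δ ⊆ cthickening δ K :=
    ball_subset_closedBall.trans (closedBall_subset_cthickening hp δ)
  rw [← NNReal.coe_le_coe, coe_nnnorm, Real.coe_toNNReal']
  refine le_max_of_le_left (Complex.norm_fderiv_le_div_of_mapsTo_ball
    (hf.mono (hball.trans hδU)) (fun z hz ↦ ?_) hδ)
  rw [mem_closedBall, dist_eq_norm, two_mul]
  exact (norm_sub_le _ _).trans (add_le_add (hM z (hball hz))
    (hM p (self_subset_cthickening K hp)))

theorem LipschitzWith.exists_forall_mem_Icc_hasDerivWithinAt {E : Type*}
    [NormedAddCommGroup E] [NormedSpace ℝ E] [CompleteSpace E] {f : E → E} {K L : ℝ≥0}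
    (hf : LipschitzWith K f) (hL : ∀ x, ‖f x‖ ≤ L) (x₀ : E) {T : ℝ} (hT : 0 ≤ T) :
    ∃ α : ℝ → E, α 0 = x₀ ∧ ∀ t ∈ Icc 0 T, HasDerivWithinAt α (f (α t)) (Icc 0 T) t :=
  (IsPicardLindelof.of_time_independent (t₀ := ⟨0, left_mem_Icc.2 hT⟩) (x₀ := x₀)
    (a := L * T.toNNReal) (r := 0) (fun x _ ↦ hL x) hf.lipschitzOnWith
    (by simp [hT])).exists_eq_forall_mem_Icc_hasDerivWithinAt₀

section RadialRetraction

variable {E : Type*} [NormedAddCommGroup E] [NormedSpace ℝ E] {r : ℝ}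

noncomputable def radialRetraction (r : ℝ) (z : E) : E := (max (‖z‖ / r) 1)⁻¹ • z

theorem radialRetraction_of_norm_le {z : E} (hz : ‖z‖ ≤ r) : radialRetraction r z = z := by
  rw [radialRetraction, max_eq_right (div_le_one_of_le₀ hz ((norm_nonneg z).trans hz)), inv_one,
    one_smul]

theorem norm_radialRetraction_le (hr : 0 < r) (z : E) : ‖radialRetraction r z‖ ≤ r := by
  rw [radialRetraction, norm_smul, norm_inv, Real.norm_of_nonneg (by positivity),
    inv_mul_le_iff₀ (by positivity)]
  calc ‖z‖ = ‖z‖ / r * r := by field_simp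
    _ ≤ max (‖z‖ / r) 1 * r := by gcongr; exact le_max_left _ _

theorem lipschitzWith_radialRetraction (hr : 0 < r) :
    LipschitzWith 2 (radialRetraction (E := E) r) := by
  refine LipschitzWith.of_dist_le_mul fun z w ↦ ?_
  set m : E → ℝ := fun v ↦ max (‖v‖ / r) 1
  have hm1 : ∀ v, 1 ≤ m v := fun v ↦ le_max_right _ _
  have hm0 : ∀ v, 0 < m v := fun v ↦ zero_lt_one.trans_le (hm1 v)
  have hmw : ‖w‖ ≤ r * m w := by
    calc ‖w‖ = r * (‖w‖ / r) := by field_simp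
      _ ≤ r * m w := by gcongr; exact le_max_left _ _
  have hmlip : |m w - m z| ≤ ‖z - w‖ / r := by
    calc |m w - m z| ≤ |‖w‖ / r - ‖z‖ / r| := abs_max_sub_max_le_abs _ _ _
      _ = |‖w‖ - ‖z‖| / r := by rw [← sub_div, abs_div, abs_of_pos hr]
      _ ≤ ‖z - w‖ / r := by gcongr; rw [abs_sub_comm]; exact abs_norm_sub_norm_le z w
  have hsplit : radialRetraction r z - radialRetraction r w
      = (m z)⁻¹ • (z - w) + ((m w - m z) / (m z * m w)) • w := by
    have hinv : (m w - m z) / (m z * m w) = (m z)⁻¹ - (m w)⁻¹ := by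
      field_simp [(hm0 z).ne', (hm0 w).ne']
    rw [hinv, smul_sub, sub_smul]
    simp only [radialRetraction, m]
    abel
  rw [dist_eq_norm, dist_eq_norm, hsplit, NNReal.coe_two, two_mul]
  refine (norm_add_le _ _).trans (add_le_add ?_ ?_)
  · rw [norm_smul, norm_inv, Real.norm_of_nonneg (hm0 z).le]
    exact inv_mul_le_of_le_mul₀ (hm0 z).le (norm_nonneg _)
      (le_mul_of_one_le_left (norm_nonneg _) (hm1 z))
  · rw [norm_smul, Real.norm_eq_abs, abs_div, abs_of_pos (mul_pos (hm0 z) (hm0 w))]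
    calc |m w - m z| / (m z * m w) * ‖w‖ ≤ (‖z - w‖ / r) / (1 * m w) * (r * m w) := by
          gcongr
          · exact hm1 z
      _ = ‖z - w‖ := by field_simp [(hm0 w).ne']

end RadialRetraction

def polydisc (a b : ℝ) : Set (ℂ × ℂ) := {p | ‖p.1‖ ≤ a ∧ ‖p.2‖ ≤ b}

theorem polydisc_eq_prod (a b : ℝ) : polydisc a b = closedBall 0 a ×ˢ closedBall 0 b := by
  ext; simp [polydisc]

theorem isCompact_polydisc (a b : ℝ) : IsCompact (polydisc a b) := by
  rw [polydisc_eq_prod]; exact (isCompact_closedBall _ _).prod (isCompact_closedBall _ _)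

theorem convex_polydisc (a b : ℝ) : Convex ℝ (polydisc a b) := by
  rw [polydisc_eq_prod]; exact (convex_closedBall _ _).prod (convex_closedBall _ _)

noncomputable def polydiscRetraction (a b : ℝ) : ℂ × ℂ → ℂ × ℂ :=
  Prod.map (radialRetraction a) (radialRetraction b)

section Retraction

variable {a b : ℝ}

theorem polydiscRetraction_of_mem {p : ℂ × ℂ} (hp : p ∈ polydisc a b) :
    polydiscRetraction a b p = p :=
  Prod.ext (radialRetraction_of_norm_le hp.1) (radialRetraction_of_norm_le hp.2)

theorem polydiscRetraction_mem (ha : 0 < a) (hb : 0 < b) (p : ℂ × ℂ) :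
    polydiscRetraction a b p ∈ polydisc a b :=
  ⟨norm_radialRetraction_le ha p.1, norm_radialRetraction_le hb p.2⟩

theorem lipschitzWith_polydiscRetraction (ha : 0 < a) (hb : 0 < b) :
    LipschitzWith 2 (polydiscRetraction a b) := by
  show LipschitzWith 2 fun p : ℂ × ℂ ↦ (radialRetraction a p.1, radialRetraction b p.2)
  simpa using ((lipschitzWith_radialRetraction ha).comp LipschitzWith.prod_fst).prodMk
    ((lipschitzWith_radialRetraction hb).comp LipschitzWith.prod_snd)

end Retraction

def diagField (A B : ℂ × ℂ → ℂ) (p : ℂ × ℂ) : ℂ × ℂ := (p.1 * A p, p.2 * B p)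

theorem diagField_polydiscRetraction (A B : ℂ × ℂ → ℂ) (a b : ℝ) (p : ℂ × ℂ) :
    diagField A B (polydiscRetraction a b p) =
      diagField (fun q ↦ (max (‖q.1‖ / a) 1)⁻¹ • A (polydiscRetraction a b q))
        (fun q ↦ (max (‖q.2‖ / b) 1)⁻¹ • B (polydiscRetraction a b q)) p := by
  simp only [diagField, polydiscRetraction, Prod.map, radialRetraction, smul_mul_assoc,
    mul_smul_comm]

def IsTrajectory (A B : ℂ × ℂ → ℂ) (T : ℝ) (x y : ℝ → ℂ) : Prop :=
  (∀ t ∈ Icc 0 T, HasDerivWithinAt x (x t * A (x t, y t)) (Icc 0 T) t) ∧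
    ∀ t ∈ Icc 0 T, HasDerivWithinAt y (y t * B (x t, y t)) (Icc 0 T) t

namespace IsTrajectory

variable {A B : ℂ × ℂ → ℂ} {T T' : ℝ} {x y x' y' : ℝ → ℂ}

theorem mono (h : IsTrajectory A B T x y) (hT' : T' ≤ T) : IsTrajectory A B T' x y :=
  have hsub : Icc 0 T' ⊆ Icc 0 T := Icc_subset_Icc_right hT'
  ⟨fun t ht ↦ (h.1 t (hsub ht)).mono hsub, fun t ht ↦ (h.2 t (hsub ht)).mono hsub⟩

theorem hasDerivWithinAt (h : IsTrajectory A B T x y) {t : ℝ} (ht : t ∈ Icc 0 T) :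
    HasDerivWithinAt (fun t ↦ (x t, y t)) (diagField A B (x t, y t)) (Icc 0 T) t :=
  (h.1 t ht).prodMk (h.2 t ht)

theorem of_hasDerivWithinAt {γ : ℝ → ℂ × ℂ}
    (hγ : ∀ t ∈ Icc 0 T, HasDerivWithinAt γ (diagField A B (γ t)) (Icc 0 T) t) :
    IsTrajectory A B T (fun t ↦ (γ t).1) (fun t ↦ (γ t).2) :=
  ⟨fun t ht ↦ (ContinuousLinearMap.fst ℝ ℂ ℂ).hasFDerivAt.comp_hasDerivWithinAt t (hγ t ht),
    fun t ht ↦ (ContinuousLinearMap.snd ℝ ℂ ℂ).hasFDerivAt.comp_hasDerivWithinAt t (hγ t ht)⟩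

theorem eqOn {s : Set (ℂ × ℂ)} {C : ℝ≥0} (hF : LipschitzOnWith C (diagField A B) s)
    (h : IsTrajectory A B T x y) (h' : IsTrajectory A B T x' y')
    (hs : ∀ t ∈ Icc 0 T, (x t, y t) ∈ s) (hs' : ∀ t ∈ Icc 0 T, (x' t, y' t) ∈ s)
    (hx : x 0 = x' 0) (hy : y 0 = y' 0) :
    EqOn (fun t ↦ (x t, y t)) (fun t ↦ (x' t, y' t)) (Icc 0 T) :=
  ODE_solution_unique_of_mem_Icc_right (v := fun _ ↦ diagField A B) (s := fun _ ↦ s)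
    (fun _ _ ↦ hF) (fun _ ht ↦ (h.hasDerivWithinAt ht).continuousWithinAt)
    (fun _ ht ↦ (h.hasDerivWithinAt (Ico_subset_Icc_self ht)).mono_of_mem_nhdsWithin
      (Icc_mem_nhdsGE_of_mem ht))
    (fun t ht ↦ hs t (Ico_subset_Icc_self ht))
    (fun _ ht ↦ (h'.hasDerivWithinAt ht).continuousWithinAt)
    (fun _ ht ↦ (h'.hasDerivWithinAt (Ico_subset_Icc_self ht)).mono_of_mem_nhdsWithin
      (Icc_mem_nhdsGE_of_mem ht))
    (fun t ht ↦ hs' t (Ico_subset_Icc_self ht)) (Prod.ext hx hy)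

theorem mem_polydisc {a b : ℝ} (h : IsTrajectory A B T x y) (hT : 0 ≤ T)
    (hA : ∀ t ∈ Icc 0 T, 0 ≤ (A (x t, y t)).re) (hB : ∀ t ∈ Icc 0 T, (B (x t, y t)).re ≤ 0)
    (hxT : ‖x T‖ ≤ a) (hy0 : ‖y 0‖ ≤ b) : ∀ t ∈ Icc 0 T, (x t, y t) ∈ polydisc a b :=
  fun _ ht ↦
    ⟨(monotoneOn_norm_of_hasDerivWithinAt_mul h.1 hA ht (right_mem_Icc.2 hT) ht.2).trans hxT,
      (antitoneOn_norm_of_hasDerivWithinAt_mul h.2 hB (left_mem_Icc.2 hT) ht ht.1).trans hy0⟩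

theorem eq_of_norm_eq {s : Set (ℂ × ℂ)} {C : ℝ≥0} (hF : LipschitzOnWith C (diagField A B) s)
    (h : IsTrajectory A B T x y) (h' : IsTrajectory A B T' x' y') (hT : 0 ≤ T) (hTT' : T ≤ T')
    (hs : ∀ t ∈ Icc 0 T, (x t, y t) ∈ s) (hs' : ∀ t ∈ Icc 0 T', (x' t, y' t) ∈ s)
    (hA' : ∀ t ∈ Icc 0 T', 0 < (A (x' t, y' t)).re) (hx₀ : x' 0 ≠ 0)
    (hx : x 0 = x' 0) (hy : y 0 = y' 0) (hnorm : ‖x T‖ = ‖x' T'‖) :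
    (x T, y T) = (x' T', y' T') := by
  have hagree : (x T, y T) = (x' T, y' T) := h.eqOn hF (h'.mono hTT') hs
    (fun t ht ↦ hs' t (Icc_subset_Icc_right hTT' ht)) hx hy (right_mem_Icc.2 hT)
  have hTeq : T = T' := (strictMonoOn_norm_of_hasDerivWithinAt_mul h'.1 hA' hx₀).injOn
    ⟨hT, hTT'⟩ (right_mem_Icc.2 (hT.trans hTT'))
    (by rw [← hnorm]; exact congrArg (‖·.1‖) hagree.symm)
  rw [hagree, hTeq]

end IsTrajectory

section Existence

variable {a b : ℝ} {A B : ℂ × ℂ → ℂ} {C : ℝ≥0}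

theorem exists_hasDerivWithinAt_diagField_polydiscRetraction (ha : 0 < a) (hb : 0 < b)
    (hF : LipschitzOnWith C (diagField A B) (polydisc a b)) (p₀ : ℂ × ℂ) {T : ℝ} (hT : 0 ≤ T) :
    ∃ γ : ℝ → ℂ × ℂ, γ 0 = p₀ ∧ ∀ t ∈ Icc 0 T,
      HasDerivWithinAt γ (diagField A B (polydiscRetraction a b (γ t))) (Icc 0 T) t := by
  obtain ⟨M, hM⟩ := (isCompact_polydisc a b).exists_bound_of_continuousOn hF.continuousOn
  have hG : LipschitzWith (C * 2) (diagField A B ∘ polydiscRetraction a b) := by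
    rw [← lipschitzOnWith_univ]
    exact hF.comp (lipschitzWith_polydiscRetraction ha hb).lipschitzOnWith
      fun p _ ↦ polydiscRetraction_mem ha hb p
  exact hG.exists_forall_mem_Icc_hasDerivWithinAt (L := M.toNNReal)
    (fun p ↦ (hM _ (polydiscRetraction_mem ha hb p)).trans (Real.le_coe_toNNReal M)) p₀ hT

theorem exists_isTrajectory_norm_eq (ha : 0 < a) (hb : 0 < b)
    (hF : LipschitzOnWith C (diagField A B) (polydisc a b)) {ε : ℝ} (hε : 0 < ε)
    (hA : ∀ p ∈ polydisc a b, ε ≤ (A p).re) (hB : ∀ p ∈ polydisc a b, (B p).re ≤ 0)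
    {x₀ y₀ : ℂ} (hx₀ : x₀ ≠ 0) (hxy₀ : (x₀, y₀) ∈ polydisc a b) :
    ∃ T, 0 ≤ T ∧ ∃ x y : ℝ → ℂ, x 0 = x₀ ∧ y 0 = y₀ ∧ IsTrajectory A B T x y ∧
      (∀ t ∈ Icc 0 T, (x t, y t) ∈ polydisc a b) ∧ ‖x T‖ = a := by
  -- staying in the polydisc up to time `Tmax` would force `‖x₀‖² + a² ≤ ‖x Tmax‖²`
  set Tmax := a ^ 2 / (2 * ε * ‖x₀‖ ^ 2)
  have hTmax : 0 ≤ Tmax := by positivity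
  obtain ⟨γ, hγ0, hγ⟩ :=
    exists_hasDerivWithinAt_diagField_polydiscRetraction ha hb hF (x₀, y₀) hTmax
  have htraj : IsTrajectory (fun q ↦ (max (‖q.1‖ / a) 1)⁻¹ • A (polydiscRetraction a b q))
      (fun q ↦ (max (‖q.2‖ / b) 1)⁻¹ • B (polydiscRetraction a b q)) Tmax
      (fun t ↦ (γ t).1) (fun t ↦ (γ t).2) := by
    simp only [diagField_polydiscRetraction] at hγ
    exact .of_hasDerivWithinAt hγ
  have hxmono := monotoneOn_norm_of_hasDerivWithinAt_mul htraj.1 fun t _ ↦ by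
    rw [Complex.smul_re, smul_eq_mul]
    exact mul_nonneg (by positivity) (hε.le.trans (hA _ (polydiscRetraction_mem ha hb _)))
  have hyanti := antitoneOn_norm_of_hasDerivWithinAt_mul htraj.2 fun t _ ↦ by
    rw [Complex.smul_re, smul_eq_mul]
    exact mul_nonpos_of_nonneg_of_nonpos (by positivity) (hB _ (polydiscRetraction_mem ha hb _))
  have hmem : ∀ t ∈ Icc 0 Tmax, ‖(γ t).1‖ ≤ a → γ t ∈ polydisc a b := fun t ht hxt ↦
    ⟨hxt, (hyanti (left_mem_Icc.2 hTmax) ht ht.1).trans (by simpa [hγ0] using hxy₀.2)⟩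
  have hexit : a ≤ ‖(γ Tmax).1‖ := by
    by_contra! hlt
    have hgrowth := norm_sq_mul_le_norm_sq_of_hasDerivWithinAt_mul hTmax htraj.1 hε.le fun t ht ↦ by
      have hK := hmem t ht ((hxmono ht (right_mem_Icc.2 hTmax) ht.2).trans hlt.le)
      dsimp only
      rw [max_eq_right (div_le_one_of_le₀ hK.1 ha.le), inv_one, one_smul,
        polydiscRetraction_of_mem hK]
      exact hA _ hK
    have : ‖x₀‖ ^ 2 * (1 + 2 * ε * (Tmax - 0)) = ‖x₀‖ ^ 2 + a ^ 2 := by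
      simp only [Tmax, sub_zero]; field_simp
    simp only [hγ0, this] at hgrowth
    nlinarith [norm_nonneg (γ Tmax).1]
  obtain ⟨T, hT, hxT⟩ := intermediate_value_Icc hTmax
    (fun t ht ↦ (htraj.1 t ht).continuousWithinAt.norm) ⟨by simpa [hγ0] using hxy₀.1, hexit⟩
  have hK : ∀ t ∈ Icc 0 T, γ t ∈ polydisc a b := fun t ht ↦
    hmem t ⟨ht.1, ht.2.trans hT.2⟩ (hxT ▸ hxmono ⟨ht.1, ht.2.trans hT.2⟩ hT ht.2)
  refine ⟨T, hT.1, _, _, by simp [hγ0], by simp [hγ0],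
    IsTrajectory.of_hasDerivWithinAt fun t ht ↦ ?_, hK, hxT⟩
  rw [← polydiscRetraction_of_mem (hK t ht)]
  exact (hγ t ⟨ht.1, ht.2.trans hT.2⟩).mono (Icc_subset_Icc_right hT.2)

end Existence

/-- For the holomorphic vector field `Z = xA ∂/∂x + yB ∂/∂y` on an open set `U`
containing the closed polydisc `{|x| ≤ a, |y| ≤ b}`, with `Re A > 0 > Re B` on
`U`, the forward trajectory of the real flow through a point `(x₀,y₀)` with
`0 < |x₀| ≤ a`, `|y₀| ≤ b` meets the set `{|x| = a, |y| ≤ b}` at exactly one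
point. -/
theorem stmt_8 (a b : ℝ) (ha : 0 < a) (hb : 0 < b)
    (U : Set (ℂ × ℂ)) (hU : IsOpen U)
    (hsub : {p : ℂ × ℂ | ‖p.1‖ ≤ a ∧ ‖p.2‖ ≤ b} ⊆ U)
    (A B : ℂ × ℂ → ℂ) (hA : DifferentiableOn ℂ A U) (hB : DifferentiableOn ℂ B U)
    (hReA : ∀ p ∈ U, 0 < (A p).re) (hReB : ∀ p ∈ U, (B p).re < 0)
    (x₀ y₀ : ℂ) (hx₀ : x₀ ≠ 0) (hxa : ‖x₀‖ ≤ a) (hyb : ‖y₀‖ ≤ b) :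
    ∃! q : ℂ × ℂ, ‖q.1‖ = a ∧ ‖q.2‖ ≤ b ∧
      ∃ T : ℝ, 0 ≤ T ∧ ∃ x y : ℝ → ℂ,
        x 0 = x₀ ∧ y 0 = y₀ ∧
        (∀ t ∈ Set.Icc 0 T, (x t, y t) ∈ U) ∧
        (∀ t ∈ Set.Icc 0 T,
          HasDerivWithinAt x (x t * A (x t, y t)) (Set.Icc 0 T) t) ∧
        (∀ t ∈ Set.Icc 0 T,
          HasDerivWithinAt y (y t * B (x t, y t)) (Set.Icc 0 T) t) ∧
        (x T, y T) = q := by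
  have hF : DifferentiableOn ℂ (diagField A B) U :=
    (differentiableOn_fst.mul hA).prodMk (differentiableOn_snd.mul hB)
  obtain ⟨C, hC⟩ := hF.exists_lipschitzOnWith_of_isCompact hU hsub (isCompact_polydisc a b)
    (convex_polydisc a b)
  obtain ⟨p, hp, hmin⟩ := (isCompact_polydisc a b).exists_isMinOn ⟨(x₀, y₀), hxa, hyb⟩
    (Complex.continuous_re.comp_continuousOn (hA.continuousOn.mono hsub))
  obtain ⟨T, hT, x, y, hx0, hy0, htraj, hmem, hxT⟩ := exists_isTrajectory_norm_eq ha hb hC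
    (hReA p (hsub hp)) (isMinOn_iff.1 hmin) (fun p hp ↦ (hReB p (hsub hp)).le) hx₀ ⟨hxa, hyb⟩
  refine ⟨(x T, y T), ⟨hxT, (hmem T (right_mem_Icc.2 hT)).2, T, hT, x, y, hx0, hy0,
    fun t ht ↦ hsub (hmem t ht), htraj.1, htraj.2, rfl⟩, ?_⟩
  rintro _ ⟨hx'T, -, T', hT', x', y', hx'0, hy'0, hU', hdx', hdy', rfl⟩
  have htraj' : IsTrajectory A B T' x' y' := ⟨hdx', hdy'⟩
  have hmem' := htraj'.mem_polydisc hT' (fun t ht ↦ (hReA _ (hU' t ht)).le)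
    (fun t ht ↦ (hReB _ (hU' t ht)).le) hx'T.le (hy'0 ▸ hyb)
  rcases le_total T T' with hTT' | hT'T
  · exact (htraj.eq_of_norm_eq hC htraj' hT hTT' hmem hmem' (fun t ht ↦ hReA _ (hU' t ht))
      (hx'0 ▸ hx₀) (hx0.trans hx'0.symm) (hy0.trans hy'0.symm) (hxT.trans hx'T.symm)).symm
  · exact htraj'.eq_of_norm_eq hC htraj hT' hT'T hmem' hmem
      (fun t ht ↦ hReA _ (hsub (hmem t ht))) (hx0 ▸ hx₀) (hx'0.trans hx0.symm)
      (hy'0.trans hy0.symm) (hx'T.trans hxT.symm)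
end

section
/- Let Z = xA ∂/∂x + yB ∂/∂y be a holomorphic vector field on a neighborhood of the closed polydisc {|x| ≤ a, |y| ≤ b} in ℂ², with Re(A) > 0 > Re(B). Let (p_n) be a sequence of points p_n = (x_n, y_n) with x_n y_n ≠ 0 and p_n → 0. For each n let q_n be the (unique) point where the forward real trajectory through p_n meets {|x| = a}. Then every limit point of the sequence (q_n) lies on the circle {|x| = a, y = 0}, i.e., q_n accumulates only on the separatrix {y = 0}. -/
/-!
Along a forward trajectory `y' = y B` with `Re B < 0`, the modulus `|y|` decreases, because
`d|y|²/dt = 2 |y|² Re B ≤ 0`. Hence `|y(qₙ)| ≤ |y(pₙ)| → 0`, while `|x(qₙ)| = a` is a closed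
condition, so every cluster point of `(qₙ)` lies on `{|x| = a, y = 0}`.
-/

open Filter Topology

theorem antitoneOn_norm_of_hasDerivWithinAt_mul_s9 {D : Set ℝ} (hD : Convex ℝ D) {y c : ℝ → ℂ}
    (hy : ∀ t ∈ D, HasDerivWithinAt y (y t * c t) D t) (hc : ∀ t ∈ D, (c t).re ≤ 0) :
    AntitoneOn (‖y ·‖) D := by
  have hsq : AntitoneOn (‖y ·‖ ^ 2) D := by
    refine antitoneOn_of_hasDerivWithinAt_nonpos hD
      (fun t ht => ((hy t ht).norm_sq).continuousWithinAt)
      (fun t ht => ((hy t (interior_subset ht)).norm_sq).mono interior_subset)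
      (fun t ht => ?_)
    have hinner : inner ℝ (y t) (y t * c t) = ‖y t‖ ^ 2 * (c t).re := by
      rw [Complex.inner, mul_right_comm, Complex.mul_conj, Complex.normSq_eq_norm_sq,
        Complex.re_ofReal_mul]
    rw [hinner]
    exact mul_nonpos_of_nonneg_of_nonpos zero_le_two
      (mul_nonpos_of_nonneg_of_nonpos (sq_nonneg _) (hc t (interior_subset ht)))
  exact fun s hs t ht hst =>
    (pow_le_pow_iff_left₀ (norm_nonneg _) (norm_nonneg _) two_ne_zero).1 (hsq hs ht hst)

theorem stmt_9_general (a b : ℝ)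
    (U : Set (ℂ × ℂ))
    (hsub : {p : ℂ × ℂ | ‖p.1‖ ≤ a ∧ ‖p.2‖ ≤ b} ⊆ U)
    (A B : ℂ × ℂ → ℂ)
    (hReB : ∀ p ∈ U, (B p).re < 0)
    (p : ℕ → ℂ × ℂ)
    (hplim : Filter.Tendsto p Filter.atTop (nhds 0))
    (q : ℕ → ℂ × ℂ)
    (hq : ∀ n, ‖(q n).1‖ = a ∧ ‖(q n).2‖ ≤ b ∧
      ∃ T : ℝ, 0 ≤ T ∧ ∃ x y : ℝ → ℂ,
        x 0 = (p n).1 ∧ y 0 = (p n).2 ∧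
        (∀ t ∈ Set.Icc 0 T, ‖x t‖ ≤ a ∧ ‖y t‖ ≤ b) ∧
        (∀ t ∈ Set.Icc 0 T,
          HasDerivWithinAt x (x t * A (x t, y t)) (Set.Icc 0 T) t) ∧
        (∀ t ∈ Set.Icc 0 T,
          HasDerivWithinAt y (y t * B (x t, y t)) (Set.Icc 0 T) t) ∧
        (x T, y T) = q n)
    (L : ℂ × ℂ) (hL : MapClusterPt L Filter.atTop q) :
    ‖L.1‖ = a ∧ L.2 = 0 := by
  have hdecay : ∀ n, ‖(q n).2‖ ≤ ‖(p n).2‖ := by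
    intro n
    obtain ⟨-, -, T, hT, x, y, -, hy0, hbound, -, hyd, hend⟩ := hq n
    have hB : ∀ t ∈ Set.Icc 0 T, (B (x t, y t)).re ≤ 0 := fun t ht =>
      (hReB _ (hsub (hbound t ht))).le
    rw [← hend, ← hy0]
    exact antitoneOn_norm_of_hasDerivWithinAt_mul_s9 (convex_Icc 0 T) hyd hB
      (Set.left_mem_Icc.2 hT) (Set.right_mem_Icc.2 hT) hT
  have hq2 : Tendsto (fun n => (q n).2) atTop (𝓝 0) :=
    squeeze_zero_norm hdecay
      (tendsto_zero_iff_norm_tendsto_zero.1 ((continuous_snd.tendsto 0).comp hplim))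
  refine ⟨?_, ?_⟩
  · exact (isClosed_eq (continuous_norm.comp continuous_fst) continuous_const).mem_of_mapClusterPt
      hL (Eventually.of_forall fun n => (hq n).1)
  · exact eq_of_nhds_neBot
      ((hL.continuousAt_comp continuous_snd.continuousAt).neBot.mono (inf_le_inf_left _ hq2))

/-- Lemma 11 of the paper ("silla"): for `Z = xA ∂/∂x + yB ∂/∂y` with
`Re A > 0 > Re B` near the closed polydisc `{|x| ≤ a, |y| ≤ b}`, if `pₙ → 0`
is a sequence of points off the axes and `qₙ` is the point where the forward
real trajectory through `pₙ` meets `{|x| = a}`, then every cluster point of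
`(qₙ)` lies on the circle `{|x| = a, y = 0}` in the separatrix `{y = 0}`. -/
theorem stmt_9 (a b : ℝ) (ha : 0 < a) (hb : 0 < b)
    (U : Set (ℂ × ℂ)) (hU : IsOpen U)
    (hsub : {p : ℂ × ℂ | ‖p.1‖ ≤ a ∧ ‖p.2‖ ≤ b} ⊆ U)
    (A B : ℂ × ℂ → ℂ) (hA : DifferentiableOn ℂ A U) (hB : DifferentiableOn ℂ B U)
    (hReA : ∀ p ∈ U, 0 < (A p).re) (hReB : ∀ p ∈ U, (B p).re < 0)
    (p : ℕ → ℂ × ℂ)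
    (hp0 : ∀ n, (p n).1 ≠ 0 ∧ (p n).2 ≠ 0)
    (hpin : ∀ n, ‖(p n).1‖ ≤ a ∧ ‖(p n).2‖ ≤ b)
    (hplim : Filter.Tendsto p Filter.atTop (nhds 0))
    (q : ℕ → ℂ × ℂ)
    (hq : ∀ n, ‖(q n).1‖ = a ∧ ‖(q n).2‖ ≤ b ∧
      ∃ T : ℝ, 0 ≤ T ∧ ∃ x y : ℝ → ℂ,
        x 0 = (p n).1 ∧ y 0 = (p n).2 ∧
        (∀ t ∈ Set.Icc 0 T, ‖x t‖ ≤ a ∧ ‖y t‖ ≤ b) ∧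
        (∀ t ∈ Set.Icc 0 T,
          HasDerivWithinAt x (x t * A (x t, y t)) (Set.Icc 0 T) t) ∧
        (∀ t ∈ Set.Icc 0 T,
          HasDerivWithinAt y (y t * B (x t, y t)) (Set.Icc 0 T) t) ∧
        (x T, y T) = q n)
    (L : ℂ × ℂ) (hL : MapClusterPt L Filter.atTop q) :
    ‖L.1‖ = a ∧ L.2 = 0 :=
  stmt_9_general a b U hsub A B hReB p hplim q hq L hL
end

section
/- Let A be a symmetric m×m real matrix that is negative definite, with nonnegative off-diagonal entries (A_{ij} ≥ 0 for i ≠ j), whose associated graph (edges where A_{ij} > 0) is a tree. For a fixed index m, order the vertices by graph distance to m. Define h recursively from the leaves farthest from m: h(i) = A_{ii} for vertices with no predecessor, and h(i) = A_{ii} − Σ_{j ≺ i} A_{ij}²/h(j) otherwise (where j ≺ i means j is an immediate predecessor of i). If all off-diagonal entries of A are 0 or 1, then h(i) < 0 for all i. -/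
open Matrix

/-!
Write `C u` for the children of `u` in the tree rooted at `r` and `p j` for the parent of `j`.
Since `A` is symmetric and supported on the diagonal and the tree edges, the recursion for `h`
completes squares along the edges:
`xᵀAx = Σ_u h_u x_u² + Σ_{j ≠ r} (A_{p j, j}² / h_j · x_{p j}² + 2 A_{p j, j} x_{p j} x_j)`,
and the edge term for `j` is `h_j (x_j + A_{p j, j} x_{p j} / h_j)² - h_j x_j²` when `h_j ≠ 0`.
Going down from the deepest vertices, once `h_j < 0` for every `j` deeper than `i`, take
`x_i = 1`, `x = 0` at the other vertices not deeper than `i`, and choose `x` top-down on the deeper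
vertices so that every completed square vanishes. Then `xᵀAx = h_i`, which is negative because
`A` is negative definite.
-/

open Finset

namespace SimpleGraph

variable {V : Type*} {G : SimpleGraph V} {r u v w : V}

theorem IsTree.exists_adj_dist_add_one (hG : G.IsTree) (hu : u ≠ r) :
    ∃ v, G.Adj v u ∧ G.dist r v + 1 = G.dist r u := by
  obtain ⟨p, hp⟩ := hG.connected.exists_walk_length_eq_dist r u
  have hnil : ¬p.Nil := fun hnil => hu hnil.eq.symm
  refine ⟨p.penultimate, p.adj_penultimate hnil, ?_⟩
  have hle : G.dist r p.penultimate ≤ p.length - 1 := p.length_dropLast ▸ G.dist_le _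
  rcases hG.dist_eq_dist_add_one_of_adj r (p.adj_penultimate hnil) with h | h <;> omega

theorem IsTree.eq_of_adj_of_dist_add_one (hG : G.IsTree) (hv : G.Adj v u) (hw : G.Adj w u)
    (hdv : G.dist r v + 1 = G.dist r u) (hdw : G.dist r w + 1 = G.dist r u) : v = w := by
  obtain ⟨p, hp⟩ := hG.connected.exists_walk_length_eq_dist r v
  obtain ⟨q, hq⟩ := hG.connected.exists_walk_length_eq_dist r w
  have hpath : ∀ {a} (s : G.Walk r a) (hs : s.length = G.dist r a) (ha : G.Adj a u),
      G.dist r a + 1 = G.dist r u → (s.concat ha).IsPath := fun s hs ha hda =>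
    Walk.isPath_of_length_eq_dist _ (by rw [Walk.length_concat, hs, hda])
  have := (hG.existsUnique_path r u).unique (hpath p hp hv hdv) (hpath q hq hw hdw)
  simpa using congrArg Walk.penultimate this

/-- The neighbour of `u` on the path from `u` to `r` (junk when `u = r`). -/
noncomputable def treeParent (G : SimpleGraph V) (r u : V) : V :=
  @Classical.epsilon V ⟨u⟩ fun v => G.Adj v u ∧ G.dist r v + 1 = G.dist r u

theorem IsTree.treeParent_spec (hG : G.IsTree) (hu : u ≠ r) :
    G.Adj (G.treeParent r u) u ∧ G.dist r (G.treeParent r u) + 1 = G.dist r u :=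
  Classical.epsilon_spec (hG.exists_adj_dist_add_one hu)

theorem IsTree.eq_treeParent (hG : G.IsTree) (hv : G.Adj v u)
    (hdv : G.dist r v + 1 = G.dist r u) : v = G.treeParent r u := by
  have hu : u ≠ r := by
    rintro rfl
    simp at hdv
  exact hG.eq_of_adj_of_dist_add_one hv (hG.treeParent_spec hu).1 hdv (hG.treeParent_spec hu).2

end SimpleGraph

theorem exists_fun_eq_ite_of_lt {α β : Type*} (d : α → ℕ) (p : α → Prop) [DecidablePred p]
    (par : α → α) (hpar : ∀ a, p a → d (par a) < d a) (F : α → β → β) (g : α → β) :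
    ∃ x : α → β, ∀ a, x a = if p a then F a (x (par a)) else g a := by
  refine ⟨(measure d).wf.fix fun a rec => if ha : p a then F a (rec (par a) (hpar a ha)) else g a,
    fun a => ?_⟩
  rw [WellFounded.fix_eq]
  split_ifs <;> rfl

/- A rooted tree is encoded by its root `r`, a parent map `par`, the children `C u` of each
vertex and a depth `d` that decreases from a vertex to its parent. -/
section RootedTree

variable {V : Type*} {r : V} {par : V → V} {C : V → Finset V} {d : V → ℕ}
  {A : Matrix V V ℝ} {h : V → ℝ}

theorem lt_of_mem_children (hC : ∀ u j, j ∈ C u ↔ j ≠ r ∧ par j = u)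
    (hd : ∀ u, u ≠ r → d (par u) < d u) {u j : V} (hj : j ∈ C u) : d u < d j := by
  obtain ⟨hjr, rfl⟩ := (hC u j).1 hj
  exact hd j hjr

variable [DecidableEq V]

theorem entry_eq_diag_add_children (hCd : ∀ u j, j ∈ C u → d u < d j)
    (hA : ∀ u v, u ≠ v → A u v ≠ 0 → v ∈ C u ∨ u ∈ C v) (u v : V) :
    A u v = (if u = v then A u v else 0) + (if v ∈ C u then A u v else 0)
      + (if u ∈ C v then A u v else 0) := by
  by_cases huv : u = v
  · subst huv
    have hu : u ∉ C u := fun hu => lt_irrefl _ (hCd u u hu)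
    simp [hu]
  by_cases hzero : A u v = 0
  · simp [hzero]
  rcases hA u v huv hzero with hv | hu
  · have hu : u ∉ C v := fun hu => lt_asymm (hCd u v hv) (hCd v u hu)
    simp [huv, hv, hu]
  · have hv : v ∉ C u := fun hv => lt_asymm (hCd u v hv) (hCd v u hu)
    simp [huv, hv, hu]

variable [Fintype V]

theorem sum_sum_children (hC : ∀ u j, j ∈ C u ↔ j ≠ r ∧ par j = u) {M : Type*}
    [AddCommMonoid M] (f : V → V → M) :
    ∑ u, ∑ j ∈ C u, f u j = ∑ j ∈ univ.erase r, f (par j) j := by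
  rw [Finset.sum_comm' (t' := univ.erase r) (s' := fun j => {par j})]
  · simp only [sum_singleton]
  · intro u j
    simp [hC, eq_comm, and_comm]

theorem dotProduct_mulVec_eq_diag_add_children (hsymm : A.IsSymm)
    (hCd : ∀ u j, j ∈ C u → d u < d j)
    (hA : ∀ u v, u ≠ v → A u v ≠ 0 → v ∈ C u ∨ u ∈ C v) (x : V → ℝ) :
    x ⬝ᵥ A *ᵥ x = ∑ u, A u u * x u ^ 2 + 2 * ∑ u, ∑ j ∈ C u, A u j * x u * x j := by
  have hexp : x ⬝ᵥ A *ᵥ x = ∑ u, ∑ v, x u * A u v * x v := by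
    simp only [dotProduct, Matrix.mulVec, mul_sum, mul_assoc]
  have hswap : ∑ u, ∑ v, (if u ∈ C v then x u * A u v * x v else 0)
      = ∑ u, ∑ j ∈ C u, A u j * x u * x j := by
    rw [Finset.sum_comm]
    refine sum_congr rfl fun v _ => ?_
    rw [← sum_filter, filter_mem_eq_inter, univ_inter]
    refine sum_congr rfl fun u _ => ?_
    rw [hsymm.apply u v]
    ring
  rw [hexp]
  conv_lhs => enter [2, u, 2, v]; rw [entry_eq_diag_add_children hCd hA u v]
  simp only [mul_add, add_mul, sum_add_distrib, mul_ite, ite_mul, mul_zero, zero_mul,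
    sum_ite_eq, mem_univ, if_true, hswap]
  simp only [← sum_filter, filter_mem_eq_inter, univ_inter]
  rw [two_mul, ← add_assoc]
  congr 2
  · exact sum_congr rfl fun u _ => by ring
  · exact sum_congr rfl fun u _ => sum_congr rfl fun j _ => by ring

theorem dotProduct_mulVec_eq_pivots (hsymm : A.IsSymm) (hCd : ∀ u j, j ∈ C u → d u < d j)
    (hA : ∀ u v, u ≠ v → A u v ≠ 0 → v ∈ C u ∨ u ∈ C v)
    (hrec : ∀ u, h u = A u u - ∑ j ∈ C u, A u j ^ 2 / h j) (x : V → ℝ) :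
    x ⬝ᵥ A *ᵥ x = ∑ u, h u * x u ^ 2
      + ∑ u, ∑ j ∈ C u, (A u j ^ 2 / h j * x u ^ 2 + 2 * A u j * x u * x j) := by
  have hdiag : ∀ u, A u u = h u + ∑ j ∈ C u, A u j ^ 2 / h j := fun u => by
    rw [hrec u]; ring
  rw [dotProduct_mulVec_eq_diag_add_children hsymm hCd hA, mul_sum]
  simp only [hdiag, add_mul, sum_mul, sum_add_distrib, mul_sum, mul_assoc, add_assoc]

theorem dotProduct_mulVec_eq_pivot_of_eq_ite (hsymm : A.IsSymm)
    (hC : ∀ u j, j ∈ C u ↔ j ≠ r ∧ par j = u) (hd : ∀ u, u ≠ r → d (par u) < d u)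
    (hdr : d r = 0) (hA : ∀ u v, u ≠ v → A u v ≠ 0 → v ∈ C u ∨ u ∈ C v)
    (hrec : ∀ u, h u = A u u - ∑ j ∈ C u, A u j ^ 2 / h j) {i : V}
    (hdeep : ∀ j, d i < d j → h j ≠ 0) {x : V → ℝ}
    (hx : ∀ u, x u = if d i < d u then -(A (par u) u * x (par u)) / h u
      else if u = i then 1 else 0) :
    x ⬝ᵥ A *ᵥ x = h i := by
  have hCd : ∀ u j, j ∈ C u → d u < d j := fun u j => lt_of_mem_children hC hd
  have hchild : ∀ u, ∀ j ∈ C u, A u j ^ 2 / h j * x u ^ 2 + 2 * A u j * x u * x j =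
      if d i < d j then -(h j * x j ^ 2) else 0 := by
    intro u j hj
    have huj := hCd u j hj
    obtain ⟨-, rfl⟩ := (hC u j).1 hj
    by_cases hij : d i < d j
    · have hxj : x j = -(A (par j) j * x (par j)) / h j := by rw [hx j, if_pos hij]
      have := hdeep j hij
      rw [if_pos hij, hxj]
      field_simp
      ring
    · have hxu : x (par j) = 0 := by
        rw [hx (par j), if_neg (by omega), if_neg (by rintro rfl; omega)]
      simp [hij, hxu]
  have hvertex : ∀ u, h u * x u ^ 2 + (if d i < d u then -(h u * x u ^ 2) else 0) =
      if u = i then h i else 0 := by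
    intro u
    by_cases hiu : d i < d u
    · rw [if_pos hiu, if_neg (by rintro rfl; omega)]
      ring
    · rw [if_neg hiu, hx u, if_neg hiu]
      split_ifs with hui
      · subst hui; ring
      · ring
  have hroot : (if d i < d r then -(h r * x r ^ 2) else 0) = 0 := by simp [hdr]
  rw [dotProduct_mulVec_eq_pivots hsymm hCd hA hrec,
    sum_congr rfl fun u _ => sum_congr rfl (hchild u), sum_sum_children hC,
    sum_erase (f := fun j => if d i < d j then -(h j * x j ^ 2) else 0) _ hroot,
    ← sum_add_distrib, sum_congr rfl fun u _ => hvertex u, sum_ite_eq']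
  simp

theorem pivot_neg_of_deeper_pivots_neg (hsymm : A.IsSymm)
    (hneg : ∀ x, x ≠ 0 → x ⬝ᵥ A *ᵥ x < 0)
    (hC : ∀ u j, j ∈ C u ↔ j ≠ r ∧ par j = u) (hd : ∀ u, u ≠ r → d (par u) < d u)
    (hdr : d r = 0) (hA : ∀ u v, u ≠ v → A u v ≠ 0 → v ∈ C u ∨ u ∈ C v)
    (hrec : ∀ u, h u = A u u - ∑ j ∈ C u, A u j ^ 2 / h j) {i : V}
    (hdeep : ∀ j, d i < d j → h j < 0) : h i < 0 := by
  obtain ⟨x, hx⟩ := exists_fun_eq_ite_of_lt d (fun u => d i < d u) par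
    (fun u hu => hd u (by rintro rfl; omega)) (fun u t => -(A (par u) u * t) / h u)
    (fun u => if u = i then 1 else 0)
  have hxi : x i = 1 := by simp [hx i]
  have hx0 : x ≠ 0 := fun h0 => by simp [h0] at hxi
  have hvalue := dotProduct_mulVec_eq_pivot_of_eq_ite hsymm hC hd hdr hA hrec
    (fun j hj => (hdeep j hj).ne) hx
  exact hvalue ▸ hneg x hx0

theorem pivot_neg (hsymm : A.IsSymm) (hneg : ∀ x, x ≠ 0 → x ⬝ᵥ A *ᵥ x < 0)
    (hC : ∀ u j, j ∈ C u ↔ j ≠ r ∧ par j = u) (hd : ∀ u, u ≠ r → d (par u) < d u)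
    (hdr : d r = 0) (hA : ∀ u v, u ≠ v → A u v ≠ 0 → v ∈ C u ∨ u ∈ C v)
    (hrec : ∀ u, h u = A u u - ∑ j ∈ C u, A u j ^ 2 / h j) (i : V) : h i < 0 := by
  by_contra! hi
  obtain ⟨k, hk, hmax⟩ := (univ.filter fun k => 0 ≤ h k).exists_max_image d ⟨i, by simpa⟩
  refine (pivot_neg_of_deeper_pivots_neg hsymm hneg hC hd hdr hA hrec fun j hj => ?_).not_ge
    (by simpa using hk)
  by_contra! hj'
  exact (hmax j (by simpa using hj')).not_gt hj

end RootedTree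

section Preds

variable {m : ℕ} {G : SimpleGraph (Fin m)} [DecidableRel G.Adj] {r u v j : Fin m}

theorem mem_preds_iff (hG : G.IsTree) : j ∈ Preds G r u ↔ j ≠ r ∧ G.treeParent r j = u := by
  simp only [Preds, mem_filter, mem_univ, true_and]
  constructor
  · rintro ⟨hadj, hd⟩
    exact ⟨by rintro rfl; simp at hd, (hG.eq_treeParent hadj.symm hd.symm).symm⟩
  · rintro ⟨hjr, rfl⟩
    obtain ⟨hadj, hd⟩ := hG.treeParent_spec hjr
    exact ⟨hadj.symm, hd.symm⟩

theorem mem_preds_or_mem_preds_of_adj (hG : G.IsTree) (huv : G.Adj u v) :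
    v ∈ Preds G r u ∨ u ∈ Preds G r v := by
  simp only [Preds, mem_filter, mem_univ, true_and]
  rcases hG.dist_eq_dist_add_one_of_adj r huv with h | h
  · exact Or.inr ⟨huv, h⟩
  · exact Or.inl ⟨huv.symm, h⟩

end Preds

theorem stmt_14_general (m : ℕ)
    (A : Matrix (Fin m) (Fin m) ℝ) (hneg : IsNegDef A)
    (hoffnn : ∀ i j, i ≠ j → 0 ≤ A i j)
    (G : SimpleGraph (Fin m)) [DecidableRel G.Adj]
    (hAdj : ∀ i j, G.Adj i j ↔ i ≠ j ∧ 0 < A i j)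
    (hG : G.IsTree) (r : Fin m)
    (h : Fin m → ℝ)
    (hrec : ∀ i, h i = A i i - ∑ j ∈ Preds G r i, A i j ^ 2 / h j) :
    ∀ i, h i < 0 := by
  have hsparse : ∀ u v, u ≠ v → A u v ≠ 0 → v ∈ Preds G r u ∨ u ∈ Preds G r v :=
    fun u v huv hA => mem_preds_or_mem_preds_of_adj hG
      ((hAdj u v).2 ⟨huv, (hoffnn u v huv).lt_of_ne' hA⟩)
  exact pivot_neg hneg.1 hneg.2 (fun u j => mem_preds_iff hG)
    (fun u hu => Nat.lt_of_succ_le (hG.treeParent_spec hu).2.le) SimpleGraph.dist_self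
    hsparse hrec

/-- Matrix-theoretic version of Proposition 7: for a symmetric negative definite
real matrix `A` with off-diagonal entries `0` or `1` whose associated graph
(edges where `A i j > 0`) is a tree, the tree-structured elimination pivots
`h i = A i i − Σ_{j ≺ i} (A i j)² / h j` (with `h i = A i i` at the vertices
with no predecessor, the predecessors being the neighbours farther from the
fixed root `r`) are all negative. -/
theorem stmt_14 (m : ℕ) (hm : 0 < m)
    (A : Matrix (Fin m) (Fin m) ℝ) (hsymm : A.IsSymm) (hneg : IsNegDef A)
    (hoffnn : ∀ i j, i ≠ j → 0 ≤ A i j)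
    (hoff01 : ∀ i j, i ≠ j → A i j = 0 ∨ A i j = 1)
    (G : SimpleGraph (Fin m)) [DecidableRel G.Adj]
    (hAdj : ∀ i j, G.Adj i j ↔ i ≠ j ∧ 0 < A i j)
    (hG : G.IsTree) (r : Fin m)
    (h : Fin m → ℝ)
    (hrec : ∀ i, h i = A i i - ∑ j ∈ Preds G r i, A i j ^ 2 / h j) :
    ∀ i, h i < 0 :=
  stmt_14_general m A hneg hoffnn G hAdj hG r h hrec
end

section
/- Let Γ be a finite connected graph each of whose vertices has a real weight, with negative definite intersection matrix, and suppose Γ is a tree. Suppose at every vertex v the total 'index budget' satisfies: (sum over corners q at v of c(v,q)) ≤ w(v), where for each edge (corner) q between v and v', the numbers c(v,q), c(v',q) are reals satisfying c(v',q) ≥ 1/c(v,q) whenever c(v,q) < 0, and c(v',q) ≥ 0 otherwise. If additionally at every vertex v, (sum over corners q at v of c(v,q)) ≥ w(v) − (sum of non-corner contributions at v) with all non-corner contributions ≥ 0, then a contradiction follows; hence some vertex has a non-corner contribution that is strictly negative. -/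
/-!
Reciprocity lets us pick, for every edge `vu`, a ratio `t > 0` with
`c v u + 2 t + c u v t² ≥ 0`. As `Γ` is a tree, some positive vector `y` realises these ratios,
`y u = t y v`, along every edge. The budget inequality then gives
`yᵀ A y = Σ_v (w v y_v² + Σ_{u ~ v} y_v y_u)
  ≥ Σ_{edges vu} (c v u y_v² + 2 y_v y_u + c u v y_u²) ≥ 0`,
contradicting negative definiteness.
-/

open Matrix

lemma exists_pos_add_two_mul_add_mul_sq_nonneg {a b : ℝ} (h : b < 0 → a ≥ 1 / b ∨ 0 ≤ a) :
    ∃ t > 0, 0 ≤ a + 2 * t + b * t ^ 2 := by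
  rcases lt_or_ge b 0 with hb | hb
  · have hinv : b⁻¹ ≤ a := (h hb).elim (by simpa using ·) ((inv_lt_zero.mpr hb).le.trans ·)
    refine ⟨-b⁻¹, neg_pos.mpr (inv_lt_zero.mpr hb), ?_⟩
    have : a + 2 * -b⁻¹ + b * (-b⁻¹) ^ 2 = a - b⁻¹ := by field_simp; ring
    linarith
  · refine ⟨1 + |a|, by positivity, ?_⟩
    nlinarith [neg_abs_le a, abs_nonneg a]

lemma mul_sq_add_two_mul_mul_add_mul_sq_nonneg {a b r s t : ℝ}
    (hr : 0 ≤ a + 2 * r + b * r ^ 2) (ht : t = s * r) :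
    0 ≤ a * s ^ 2 + 2 * s * t + b * t ^ 2 := by
  have : a * s ^ 2 + 2 * s * t + b * t ^ 2 = s ^ 2 * (a + 2 * r + b * r ^ 2) := by
    rw [ht]; ring
  rw [this]
  positivity

namespace SimpleGraph

variable {V : Type*} {G : SimpleGraph V}

lemma IsTree.exists_pos_potential (hG : G.IsTree) (ρ : V → V → ℝ)
    (hρ : ∀ v u, G.Adj v u → 0 < ρ v u) :
    ∃ y : V → ℝ, (∀ v, 0 < y v) ∧
      ∀ v u, G.Adj v u → y u = y v * ρ v u ∨ y v = y u * ρ u v := by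
  classical
  obtain ⟨r⟩ := hG.connected.nonempty
  choose p hp hpuniq using hG.existsUnique_path r
  let y v := ((p v).darts.map fun d => ρ d.fst d.snd).prod
  refine ⟨y, fun v => List.prod_pos ?_, fun v u hvu => ?_⟩
  · simp only [List.mem_map]
    rintro _ ⟨d, -, rfl⟩
    exact hρ _ _ d.adj
  -- Either the path to `v` ends with the edge `uv`, or the path to `u` extends it by `vu`.
  by_cases hu : u ∈ (p v).support
  · right
    have htake : (p v).takeUntil u hu = p u := hpuniq u _ ((hp v).takeUntil hu)
    have hdrop : (p v).dropUntil u hu = Walk.cons hvu.symm .nil :=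
      (hG.existsUnique_path u v).unique ((hp v).dropUntil hu) (by simp [hvu.ne'])
    have hdarts : (p v).darts = (p u).darts ++ [⟨(u, v), hvu.symm⟩] := by
      rw [← (p v).take_spec hu, Walk.darts_append, htake, hdrop]
      rfl
    simp [y, hdarts]
  · left
    have hpath : ((p v).concat hvu).IsPath := by
      rw [Walk.isPath_def, Walk.support_concat, ← List.concat_eq_append]
      exact (List.nodup_concat _ _).mpr ⟨hu, (hp v).support_nodup⟩
    simp [y, ← hpuniq u _ hpath, Walk.darts_concat]

lemma eq_diagonal_add_adjMatrix [DecidableEq V] [DecidableRel G.Adj]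
    {A : Matrix V V ℝ} {w : V → ℝ}
    (hdiag : ∀ v, A v v = w v) (hoff : ∀ i j, i ≠ j → A i j = if G.Adj i j then 1 else 0) :
    A = diagonal w + G.adjMatrix ℝ := by
  ext i j
  rcases eq_or_ne i j with rfl | hij
  · simp [hdiag]
  · simp [hoff i j hij, hij]

variable [Fintype V] [DecidableRel G.Adj]

lemma sum_sum_neighborFinset_comm {M : Type*} [AddCommMonoid M] (g : V → V → M) :
    ∑ v, ∑ u ∈ G.neighborFinset v, g v u = ∑ v, ∑ u ∈ G.neighborFinset v, g u v :=
  Finset.sum_comm' fun v u => by simp [adj_comm]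

lemma sum_sum_neighborFinset_nonneg {g : V → V → ℝ}
    (hg : ∀ v u, G.Adj v u → 0 ≤ g v u + g u v) :
    0 ≤ ∑ v, ∑ u ∈ G.neighborFinset v, g v u := by
  have hsum : 0 ≤ ∑ v, ∑ u ∈ G.neighborFinset v, (g v u + g u v) :=
    Finset.sum_nonneg fun v _ => Finset.sum_nonneg fun u hu => hg v u (by simpa using hu)
  simp only [Finset.sum_add_distrib, ← sum_sum_neighborFinset_comm g] at hsum
  linarith

lemma dotProduct_diagonal_add_adjMatrix_mulVec [DecidableEq V] (w y : V → ℝ) :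
    y ⬝ᵥ (diagonal w + G.adjMatrix ℝ) *ᵥ y
      = ∑ v, (w v * y v ^ 2 + ∑ u ∈ G.neighborFinset v, y v * y u) := by
  simp only [add_mulVec, dotProduct, Pi.add_apply, mulVec_diagonal, adjMatrix_mulVec_apply]
  exact Finset.sum_congr rfl fun v _ => by rw [← Finset.mul_sum]; ring

end SimpleGraph

theorem stmt_16_general (m : ℕ) (G : SimpleGraph (Fin m)) [DecidableRel G.Adj]
    (hG : G.IsTree)
    (w : Fin m → ℝ)
    (A : Matrix (Fin m) (Fin m) ℝ)
    (hdiag : ∀ v, A v v = w v)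
    (hoff : ∀ i j, i ≠ j → A i j = if G.Adj i j then 1 else 0)
    (hneg : IsNegDef A)
    (c : Fin m → Fin m → ℝ)
    (hrec : ∀ v v', G.Adj v v' → c v v' < 0 → c v' v ≥ 1 / c v v' ∨ 0 ≤ c v' v)
    (hbudget : ∀ v, ∑ u ∈ G.neighborFinset v, c v u ≤ w v) :
    False := by
  have hratio : ∀ v u, ∃ t > 0, G.Adj v u → 0 ≤ c v u + 2 * t + c u v * t ^ 2 := fun v u =>
    if hvu : G.Adj v u then
      (exists_pos_add_two_mul_add_mul_sq_nonneg (hrec u v hvu.symm)).imp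
        fun _ ht => ⟨ht.1, fun _ => ht.2⟩
    else ⟨1, one_pos, hvu.elim⟩
  choose ρ hρpos hρ using hratio
  obtain ⟨y, hy, hyρ⟩ := hG.exists_pos_potential ρ fun v u _ => hρpos v u
  have hedge : ∀ v u, G.Adj v u →
      0 ≤ (c v u * y v ^ 2 + y v * y u) + (c u v * y u ^ 2 + y u * y v) := by
    intro v u hvu
    rcases hyρ v u hvu with h | h
    · linarith [mul_sq_add_two_mul_mul_add_mul_sq_nonneg (hρ v u hvu) h]
    · linarith [mul_sq_add_two_mul_mul_add_mul_sq_nonneg (hρ u v hvu.symm) h]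
  refine (hneg.2 y fun h => (hy hG.connected.nonempty.some).ne' (by simp [h])).not_ge ?_
  calc 0 ≤ ∑ v, ∑ u ∈ G.neighborFinset v, (c v u * y v ^ 2 + y v * y u) :=
        SimpleGraph.sum_sum_neighborFinset_nonneg hedge
    _ ≤ ∑ v, (w v * y v ^ 2 + ∑ u ∈ G.neighborFinset v, y v * y u) := by
        refine Finset.sum_le_sum fun v _ => ?_
        rw [Finset.sum_add_distrib, ← Finset.sum_mul]
        gcongr
        exact hbudget v
    _ = y ⬝ᵥ A *ᵥ y := by
        rw [SimpleGraph.eq_diagonal_add_adjMatrix hdiag hoff,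
          SimpleGraph.dotProduct_diagonal_add_adjMatrix_mulVec]

/-- Abstract version of the proof of Theorem 3.  `Γ` is a finite connected
weighted tree with negative definite intersection matrix; each edge (corner)
between adjacent vertices `v, v'` carries reals `c v v'`, `c v' v` satisfying the
reciprocity condition (`c v' v ≥ 1 / c v v'` whenever `c v v' < 0`, or
`c v' v ≥ 0`); at every vertex the sum of the corner indices is at most `w v`
(the index budget) and at least `w v` minus the sum of the non-corner
contributions, the latter being all nonnegative.  Then a contradiction follows. -/
theorem stmt_16 (m : ℕ) (hm : 0 < m) (G : SimpleGraph (Fin m)) [DecidableRel G.Adj]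
    (hconn : G.Connected) (hG : G.IsTree)
    (w : Fin m → ℝ) (hw : ∀ v, w v ≠ 0)
    (A : Matrix (Fin m) (Fin m) ℝ)
    (hdiag : ∀ v, A v v = w v)
    (hoff : ∀ i j, i ≠ j → A i j = if G.Adj i j then 1 else 0)
    (hneg : IsNegDef A)
    (c : Fin m → Fin m → ℝ)
    (hrec : ∀ v v', G.Adj v v' → c v v' < 0 → c v' v ≥ 1 / c v v' ∨ 0 ≤ c v' v)
    (F : Fin m → Finset ℕ) (f : Fin m → ℕ → ℝ)
    (hf : ∀ v, ∀ q ∈ F v, 0 ≤ f v q)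
    (hbudget : ∀ v, ∑ u ∈ G.neighborFinset v, c v u ≤ w v)
    (hlower : ∀ v, ∑ u ∈ G.neighborFinset v, c v u ≥ w v - ∑ q ∈ F v, f v q) :
    False :=
  stmt_16_general m G hG w A hdiag hoff hneg c hrec hbudget
end
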